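/- arXiv:1808.02333 — 9 statements merged into one kernel-verified Lean document; each statement's English description precedes it below -/
import Mathlib

section
/- Let S be a finite linearly ordered set with |S| = k ≥ 1, let (Ω, 𝓕, P) be a probability space, and let X, Y : Ω → S be random variables with P(X ≤ Y) = 1. Then P(X ≠ Y) ≤ (k − 1) · ‖law(X) − law(Y)‖_TV. -/
/-!
On the event `X ≤ Y`, `X ≠ Y` means that some level `s` other than the maximum of `S`
separates them, `X ≤ s < Y` (take `s = X`). As `Y ≤ s` forces `X ≤ s` almost surely,
`P(X ≤ s < Y) = P(X ≤ s) - P(Y ≤ s)`, the difference of the two laws on `Iic s`, which is at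
most their total variation distance. A union bound over the `k - 1` non-maximal levels concludes.
-/

open MeasureTheory

theorem Finset.sum_sub_le_half_sum_abs_sub {ι : Type*} [Fintype ι] (f g : ι → ℝ)
    (hfg : ∑ i, f i = ∑ i, g i) (A : Finset ι) :
    ∑ i ∈ A, (f i - g i) ≤ 1 / 2 * ∑ i, |f i - g i| := by
  classical
  -- The total mass of `f - g` vanishes, so its sum over `A` equals its negated sum over `Aᶜ`.
  have hcompl : ∑ i ∈ A, (f i - g i) = ∑ i ∈ Aᶜ, (g i - f i) := by
    simp only [Finset.sum_sub_distrib]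
    linarith [Finset.sum_add_sum_compl A f, Finset.sum_add_sum_compl A g]
  have hA : ∑ i ∈ A, (f i - g i) ≤ ∑ i ∈ A, |f i - g i| :=
    Finset.sum_le_sum fun i _ => le_abs_self _
  have hAc : ∑ i ∈ Aᶜ, (g i - f i) ≤ ∑ i ∈ Aᶜ, |f i - g i| :=
    Finset.sum_le_sum fun i _ => abs_sub_comm (f i) (g i) ▸ le_abs_self _
  rw [← Finset.sum_add_sum_compl A fun i => |f i - g i|]
  linarith

theorem MeasureTheory.measureReal_sub_le_half_sum_abs_sub {S : Type*} [Fintype S]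
    [MeasurableSpace S] [MeasurableSingletonClass S] (μ ν : Measure S)
    [IsProbabilityMeasure μ] [IsProbabilityMeasure ν] (A : Set S) :
    μ.real A - ν.real A ≤ 1 / 2 * ∑ s, |μ.real {s} - ν.real {s}| := by
  classical
  have hsum (ρ : Measure S) [IsProbabilityMeasure ρ] (B : Set S) :
      ∑ s ∈ B.toFinset, ρ.real {s} = ρ.real B := by
    simp
  rw [← hsum μ, ← hsum ν, ← Finset.sum_sub_distrib]
  exact Finset.sum_sub_le_half_sum_abs_sub _ _ (by simp) _

theorem MeasureTheory.measureReal_sdiff_of_ae_subset {Ω : Type*} [MeasurableSpace Ω]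
    {μ : Measure Ω} [IsFiniteMeasure μ] {A B : Set Ω} (hBA : B ≤ᵐ[μ] A)
    (hB : MeasurableSet B) : μ.real (A \ B) = μ.real A - μ.real B := by
  rw [measureReal_sdiff' hB, Set.union_comm,
    measureReal_congr (union_ae_eq_right.2 (ae_le_set.1 hBA))]

section LinearOrder

variable {Ω S : Type*} [MeasurableSpace Ω] {P : Measure Ω}
  [Fintype S] [LinearOrder S]

theorem measureReal_ne_le_sum_measureReal_le_sdiff_le [Nonempty S] [IsFiniteMeasure P]
    {X Y : Ω → S} (hXY : ∀ᵐ ω ∂P, X ω ≤ Y ω) :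
    P.real {ω | X ω ≠ Y ω} ≤
      ∑ s ∈ Finset.univ.erase (Finset.univ.max' Finset.univ_nonempty),
        P.real ({ω | X ω ≤ s} \ {ω | Y ω ≤ s}) := by
  refine le_trans ?_ (measureReal_biUnion_finset_le _ _)
  refine ENNReal.toReal_mono (measure_ne_top _ _) (measure_mono_ae ?_)
  filter_upwards [hXY] with ω hle hne
  have hlt : X ω < Y ω := lt_of_le_of_ne hle hne
  refine Set.mem_iUnion₂.2 ⟨X ω, Finset.mem_erase.2 ⟨fun hmax => ?_, Finset.mem_univ _⟩,
    le_rfl, not_le.mpr hlt⟩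
  exact (Finset.le_max' _ (Y ω) (Finset.mem_univ _)).not_gt (hmax ▸ hlt)

theorem measureReal_le_sdiff_le_eq_map_sub_map [MeasurableSpace S] [MeasurableSingletonClass S]
    [IsFiniteMeasure P] {X Y : Ω → S} (hX : Measurable X) (hY : Measurable Y)
    (hXY : ∀ᵐ ω ∂P, X ω ≤ Y ω) (s : S) :
    P.real ({ω | X ω ≤ s} \ {ω | Y ω ≤ s}) =
      (P.map X).real (Set.Iic s) - (P.map Y).real (Set.Iic s) := by
  have hYX : {ω | Y ω ≤ s} ≤ᵐ[P] {ω | X ω ≤ s} := by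
    filter_upwards [hXY] with ω hle hY using hle.trans hY
  rw [measureReal_sdiff_of_ae_subset hYX (hY (.of_discrete : MeasurableSet (Set.Iic s))),
    map_measureReal_apply hX .of_discrete, map_measureReal_apply hY .of_discrete]
  rfl

end LinearOrder

theorem stmt0_general {S : Type*} [Fintype S] [LinearOrder S]
    [MeasurableSpace S] [MeasurableSingletonClass S]
    {Ω : Type*} [MeasurableSpace Ω] (P : Measure Ω) [IsProbabilityMeasure P]
    (k : ℕ) (hcard : Fintype.card S = k)
    (X Y : Ω → S) (hX : Measurable X) (hY : Measurable Y)
    (hle : P {ω | X ω ≤ Y ω} = 1) :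
    (P {ω | X ω ≠ Y ω}).toReal ≤
      ((k : ℝ) - 1) *
        ((1 / 2) * ∑ s : S, |((P.map X) {s}).toReal - ((P.map Y) {s}).toReal|) := by
  have : Nonempty S := (nonempty_of_isProbabilityMeasure P).map X
  have := Measure.isProbabilityMeasure_map (μ := P) hX.aemeasurable
  have := Measure.isProbabilityMeasure_map (μ := P) hY.aemeasurable
  have hXY : ∀ᵐ ω ∂P, X ω ≤ Y ω :=
    (mem_ae_iff_prob_eq_one <|
      (hX.prodMk hY) (.of_discrete : MeasurableSet {p : S × S | p.1 ≤ p.2})).2 hle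
  set T := Finset.univ.erase (Finset.univ.max' (Finset.univ_nonempty (α := S)))
  set D := (1 / 2) * ∑ s : S, |(P.map X).real {s} - (P.map Y).real {s}|
  have hT : (T.card : ℝ) = k - 1 := by
    rw [Finset.card_erase_of_mem (Finset.mem_univ _), Finset.card_univ, hcard,
      Nat.cast_pred (hcard ▸ Fintype.card_pos)]
  calc P.real {ω | X ω ≠ Y ω}
      ≤ ∑ s ∈ T, P.real ({ω | X ω ≤ s} \ {ω | Y ω ≤ s}) :=
        measureReal_ne_le_sum_measureReal_le_sdiff_le hXY
    _ = ∑ s ∈ T, ((P.map X).real (Set.Iic s) - (P.map Y).real (Set.Iic s)) :=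
        Finset.sum_congr rfl fun s _ => measureReal_le_sdiff_le_eq_map_sub_map hX hY hXY s
    _ ≤ ∑ _s ∈ T, D := Finset.sum_le_sum fun s _ => measureReal_sub_le_half_sum_abs_sub _ _ _
    _ = (k - 1) * D := by rw [Finset.sum_const, nsmul_eq_mul, hT]

/-- Let `S` be a finite linearly ordered set with `|S| = k ≥ 1`, let
`(Ω, 𝓕, P)` be a probability space, and let `X, Y : Ω → S` be random variables with
`P(X ≤ Y) = 1`. Then `P(X ≠ Y) ≤ (k - 1) ⬝ ‖law X - law Y‖_TV`, where the total variation
distance between two probability measures `μ, ν` on `S` is `½ ∑_{s ∈ S} |μ {s} - ν {s}|`. -/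
theorem stmt0 {S : Type*} [Fintype S] [LinearOrder S]
    [MeasurableSpace S] [MeasurableSingletonClass S]
    {Ω : Type*} [MeasurableSpace Ω] (P : Measure Ω) [IsProbabilityMeasure P]
    (k : ℕ) (hk : 1 ≤ k) (hcard : Fintype.card S = k)
    (X Y : Ω → S) (hX : Measurable X) (hY : Measurable Y)
    (hle : P {ω | X ω ≤ Y ω} = 1) :
    (P {ω | X ω ≠ Y ω}).toReal ≤
      ((k : ℝ) - 1) *
        ((1 / 2) * ∑ s : S, |((P.map X) {s}).toReal - ((P.map Y) {s}).toReal|) :=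
  stmt0_general P k hcard X Y hX hY hle
end

section
/- Let ψ : ℕ → ℝ be positive, nonincreasing, with ψ(n) → 0 as n → ∞, and let b : ℕ → ℝ be nonnegative with b(n)/n → 0 as n → ∞. Suppose there exist constants C, c > 0 such that ψ(2n) ≤ e^{b(s)} ψ(n)² + C e^{−c s} for all integers n ≥ s ≥ 1. Then ψ decays faster than any stretched exponential: for every δ ∈ (0,1) there exists N such that ψ(n) ≤ exp(−n^δ) for all n ≥ N. -/
open Filter Real

set_option maxHeartbeats 1000000 in
/-- Let `ψ : ℕ → ℝ` be positive, nonincreasing (on positive integers),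
with `ψ(n) → 0`, and let `b : ℕ → ℝ` be nonnegative and sub-linear. Suppose there are
`C, c > 0` with `ψ(2n) ≤ e^{b(s)} ψ(n)² + C e^{-cs}` for all `n ≥ s ≥ 1`. Then `ψ` decays
faster than any stretched exponential. -/
theorem stmt1 (ψ b : ℕ → ℝ) (C c : ℝ)
    (hψpos : ∀ n : ℕ, 1 ≤ n → 0 < ψ n)
    (hψmono : ∀ m n : ℕ, 1 ≤ m → m ≤ n → ψ n ≤ ψ m)
    (hψ0 : Filter.Tendsto ψ Filter.atTop (nhds 0))
    (hbnonneg : ∀ n : ℕ, 1 ≤ n → 0 ≤ b n)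
    (hbsub : Filter.Tendsto (fun n : ℕ => b n / n) Filter.atTop (nhds 0))
    (hC : 0 < C) (hc : 0 < c)
    (hrec : ∀ n s : ℕ, 1 ≤ s → s ≤ n →
      ψ (2 * n) ≤ Real.exp (b s) * (ψ n) ^ 2 + C * Real.exp (-c * s)) :
    ∀ δ : ℝ, 0 < δ → δ < 1 →
      ∃ N : ℕ, ∀ n : ℕ, N ≤ n → ψ n ≤ Real.exp (-(n : ℝ) ^ δ) := by
  intro δ hδ0 hδ1
  set δ' : ℝ := (1 + δ) / 2 with hδ'def
  set β : ℝ := (3 + δ) / 4 with hβdef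
  have hδ'0 : 0 < δ' := by simp only [hδ'def]; linarith
  have hδδ' : δ < δ' := by simp only [hδ'def]; linarith
  have hδ'β : δ' < β := by simp only [hδ'def, hβdef]; linarith
  have hβ1 : β < 1 := by simp only [hβdef]; linarith
  have hβ0 : 0 < β := by linarith
  have h2β : (2:ℝ) ^ β < 2 := by
    calc (2:ℝ) ^ β < 2 ^ (1:ℝ) := by
          exact Real.rpow_lt_rpow_of_exponent_lt one_lt_two hβ1
      _ = 2 := Real.rpow_one 2
  have h2β1 : (1:ℝ) ≤ 2 ^ β := by
    rw [show (1:ℝ) = 2 ^ (0:ℝ) by simp]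
    exact Real.rpow_le_rpow_of_exponent_le one_le_two (le_of_lt hβ0)
  set κ : ℝ := (2 - 2 ^ β) / 2 with hκdef
  have hκ0 : 0 < κ := by simp only [hκdef]; linarith
  have hκhalf : κ ≤ 1/2 := by simp only [hκdef]; linarith
  have h2βκ : (2:ℝ) ^ β = 2 - 2*κ := by simp only [hκdef]; ring
  have h2κpos : (0:ℝ) < 2 - κ := by linarith
  set E : ℝ := max (Real.log (2*C)) 0 + 1 with hEdef
  have hE1 : 1 ≤ E := by
    simp only [hEdef]; have := le_max_right (Real.log (2*C)) 0; linarith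
  have hElog : Real.log (2*C) + 1 ≤ E := by
    simp only [hEdef]; have := le_max_left (Real.log (2*C)) 0; linarith
  set K₁ : ℝ := (2 + E)/c + 1 with hK₁def
  have hK₁0 : 0 < K₁ := by
    have : 0 < (2+E)/c := by positivity
    simp only [hK₁def]; linarith
  set η : ℝ := κ / (2 * K₁) with hηdef
  have hη0 : 0 < η := by simp only [hηdef]; positivity
  -- b s ≤ η s for s ≥ S₀
  obtain ⟨S₀, hS₀⟩ : ∃ S₀ : ℕ, ∀ s : ℕ, S₀ ≤ s → b s ≤ η * s := by
    have h := hbsub.eventually_lt_const hη0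
    rw [Filter.eventually_atTop] at h
    obtain ⟨S, hS⟩ := h
    refine ⟨max S 1, fun s hs => ?_⟩
    have hs1 : 1 ≤ s := le_trans (le_max_right _ _) hs
    have hsS : S ≤ s := le_trans (le_max_left _ _) hs
    have hspos : (0:ℝ) < s := by exact_mod_cast hs1
    have := hS s hsS
    rw [div_lt_iff₀ hspos] at this
    linarith
  -- Λ and a
  set Λ : ℝ := max (c * S₀) (max (2/κ) 1) with hΛdef
  have hΛ1 : 1 ≤ Λ := le_trans (le_max_right _ _) (le_max_right _ _)
  have hΛ0 : (0:ℝ) < Λ := lt_of_lt_of_le one_pos hΛ1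
  have hΛκ : 2/κ ≤ Λ := le_trans (le_max_left _ _) (le_max_right _ _)
  have hΛS : c * S₀ ≤ Λ := le_max_left _ _
  set a : ℝ := 2 * Λ with hadef
  have ha0 : 0 < a := by simp only [hadef]; linarith
  -- eventual conditions:
  -- (i) ratio bounds
  have hratio : ∀ᶠ m : ℕ in atTop,
      ((2*(m:ℝ)+1)/m) ^ δ' ≤ 2 - κ ∧ ((2*(m:ℝ)+1)/m) ^ β ≤ 2 - κ := by
    have h2 : Tendsto (fun m : ℕ => (2*(m:ℝ)+1)/m) atTop (nhds 2) := by
      have h0 : Tendsto (fun m : ℕ => 2 + ((m:ℝ))⁻¹) atTop (nhds (2 + 0)) :=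
        tendsto_const_nhds.add (tendsto_inv_atTop_zero.comp tendsto_natCast_atTop_atTop)
      rw [add_zero] at h0
      apply h0.congr'
      filter_upwards [Filter.eventually_ge_atTop 1] with m hm
      have : (0:ℝ) < m := by exact_mod_cast hm
      field_simp
    have hc1 : ContinuousAt (fun x : ℝ => x ^ δ') 2 :=
      Real.continuousAt_rpow_const 2 δ' (Or.inl two_ne_zero)
    have hc2 : ContinuousAt (fun x : ℝ => x ^ β) 2 :=
      Real.continuousAt_rpow_const 2 β (Or.inl two_ne_zero)
    have t1 := (hc1.tendsto.comp h2)
    have t2 := (hc2.tendsto.comp h2)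
    have hlt1 : (2:ℝ) ^ δ' < 2 - κ := by
      have : (2:ℝ) ^ δ' ≤ 2 ^ β :=
        Real.rpow_le_rpow_of_exponent_le one_le_two (le_of_lt hδ'β)
      rw [h2βκ] at this; linarith
    have hlt2 : (2:ℝ) ^ β < 2 - κ := by rw [h2βκ]; linarith
    exact (t1.eventually_le_const hlt1).and (t2.eventually_le_const hlt2)
  -- (ii) s ≤ m condition
  have hsm : ∀ᶠ m : ℕ in atTop, (2*(m:ℝ) ^ δ' + E)/c + 1 ≤ m := by
    have hr : Tendsto (fun x : ℝ => x ^ (δ' - 1)) atTop (nhds 0) := by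
      have := tendsto_rpow_neg_atTop (by linarith : (0:ℝ) < 1 - δ')
      simpa [neg_sub] using this
    have hr' := hr.comp tendsto_natCast_atTop_atTop
    have h1 : ∀ᶠ m : ℕ in atTop, ((m:ℝ)) ^ (δ' - 1) ≤ c/4 :=
      hr'.eventually_le_const (by positivity)
    have h2 : ∀ᶠ m : ℕ in atTop, 2*(E/c + 1) ≤ (m:ℝ) :=
      tendsto_natCast_atTop_atTop.eventually_ge_atTop _
    filter_upwards [h1, h2, Filter.eventually_ge_atTop 1] with m hm1 hm2 hm3
    have hmpos : (0:ℝ) < m := by exact_mod_cast hm3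
    have hmδ : (m:ℝ) ^ δ' = (m:ℝ) ^ (δ' - 1) * m := by
      rw [← Real.rpow_add_one (ne_of_gt hmpos)]; ring_nf
    have hb1 : 2*(m:ℝ) ^ δ' ≤ (c/2) * m := by
      rw [hmδ]
      have := mul_le_mul_of_nonneg_right hm1 (le_of_lt hmpos)
      nlinarith
    have : (2*(m:ℝ) ^ δ' + E)/c ≤ (m:ℝ)/2 + E/c := by
      rw [div_le_iff₀ hc]
      have : ((m:ℝ)/2 + E/c) * c = (c/2)*m + E := by field_simp
      rw [this]
      linarith
    linarith
  -- (iv) m^δ' ≥ Λ eventually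
  have hΛev : ∀ᶠ m : ℕ in atTop, Λ ≤ (m:ℝ) ^ δ' := by
    have := (tendsto_rpow_atTop hδ'0).comp tendsto_natCast_atTop_atTop
    exact this.eventually_ge_atTop Λ
  -- (iii) ψ small eventually
  have hψev : ∀ᶠ m : ℕ in atTop, ψ m < Real.exp (-a) :=
    hψ0.eventually_lt_const (by positivity)
  -- choose N'
  obtain ⟨N', hN'⟩ := Filter.eventually_atTop.mp
    (hratio.and (hsm.and (hΛev.and (hψev.and (Filter.eventually_ge_atTop 1)))))
  have hN'self := hN' N' le_rfl
  have hN'1 : 1 ≤ N' := hN'self.2.2.2.2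
  have hN'pos : (0:ℝ) < 2 * N' := by
    have : (1:ℝ) ≤ N' := by exact_mod_cast hN'1
    linarith
  -- define F
  set F : ℕ → ℝ := fun n => min ((n:ℝ) ^ δ') (a * ((n:ℝ)/(2*N')) ^ β) with hFdef
  have hFmono : ∀ m n : ℕ, m ≤ n → F m ≤ F n := by
    intro m n hmn
    have hmn' : (m:ℝ) ≤ n := by exact_mod_cast hmn
    have hm0 : (0:ℝ) ≤ m := Nat.cast_nonneg m
    apply min_le_min
    · exact Real.rpow_le_rpow hm0 hmn' (le_of_lt hδ'0)
    · have hdiv : (m:ℝ)/(2*N') ≤ (n:ℝ)/(2*N') := by gcongr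
      exact mul_le_mul_of_nonneg_left
        (Real.rpow_le_rpow (by positivity) hdiv hβ0.le) ha0.le
  -- lower bound on F
  have hFΛ : ∀ m : ℕ, N' ≤ m → Λ ≤ F m := by
    intro m hm
    obtain ⟨-, -, hΛm, -, -⟩ := hN' m hm
    apply le_min hΛm
    have hmN : (N':ℝ) ≤ m := by exact_mod_cast hm
    have hge : (1:ℝ)/2 ≤ (m:ℝ)/(2*N') := by
      rw [le_div_iff₀ hN'pos]; linarith
    have h1 : ((1:ℝ)/2) ^ β ≤ ((m:ℝ)/(2*N')) ^ β :=
      Real.rpow_le_rpow (by norm_num) hge hβ0.le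
    have h2 : (1:ℝ)/2 ≤ ((1:ℝ)/2) ^ β := by
      have := Real.rpow_le_rpow_of_exponent_ge (by norm_num : (0:ℝ) < 1/2)
        (by norm_num : (1:ℝ)/2 ≤ 1) hβ1.le
      rwa [Real.rpow_one] at this
    have : a * (1/2) ≤ a * ((m:ℝ)/(2*N')) ^ β :=
      mul_le_mul_of_nonneg_left (h2.trans h1) ha0.le
    simp only [hadef] at this ⊢
    linarith
  have hψN' : ψ N' ≤ Real.exp (-a) := (hN'self.2.2.2.1).le
  -- main induction
  have key : ∀ n : ℕ, N' ≤ n → ψ n ≤ Real.exp (-(F n)) := by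
    intro n
    induction n using Nat.strong_induction_on with
    | _ n ih =>
    intro hn
    by_cases hcase : n < 2 * N'
    · -- base case
      have h1 : ψ n ≤ ψ N' := hψmono N' n hN'1 hn
      have hFa : F n ≤ a := by
        have h2 : ((n:ℝ)/(2*N')) ^ β ≤ 1 := by
          apply Real.rpow_le_one (by positivity) _ hβ0.le
          rw [div_le_one hN'pos]; exact_mod_cast hcase.le
        calc F n ≤ a * ((n:ℝ)/(2*N')) ^ β := min_le_right _ _
          _ ≤ a * 1 := mul_le_mul_of_nonneg_left h2 ha0.le
          _ = a := mul_one a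
      exact h1.trans (hψN'.trans (Real.exp_le_exp.mpr (by linarith)))
    · -- inductive step
      push_neg at hcase
      set m := n / 2 with hmdef
      have hmod := Nat.div_add_mod n 2
      have hmodlt : n % 2 < 2 := Nat.mod_lt n (by norm_num)
      have hm2 : 2 * m ≤ n := by omega
      have hn2m1 : n ≤ 2 * m + 1 := by omega
      have hmN' : N' ≤ m := by omega
      have hmlt : m < n := by omega
      have hm1 : 1 ≤ m := le_trans hN'1 hmN'
      obtain ⟨⟨hr1, hr2⟩, hsmm, hΛm, -, -⟩ := hN' m hmN'
      have hmpos : (0:ℝ) < m := by exact_mod_cast hm1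
      have hFmΛ : Λ ≤ F m := hFΛ m hmN'
      have hFm0 : (0:ℝ) < F m := lt_of_lt_of_le hΛ0 hFmΛ
      have hFm1 : (1:ℝ) ≤ F m := le_trans hΛ1 hFmΛ
      have hFmn : F m ≤ F n := hFmono m n hmlt.le
      have hFn0 : (0:ℝ) < F n := lt_of_lt_of_le hFm0 hFmn
      have hFnm : F n ≤ F (2*m+1) := hFmono n (2*m+1) hn2m1
      -- doubling: F (2m+1) ≤ (2-κ) F m
      have hdouble : F (2*m+1) ≤ (2 - κ) * F m := by
        have hX : (2*(m:ℝ)+1) ^ δ' ≤ (2-κ) * (m:ℝ) ^ δ' := by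
          have heq : (2*(m:ℝ)+1) = ((2*(m:ℝ)+1)/m) * m := by field_simp
          calc (2*(m:ℝ)+1) ^ δ' = ((2*(m:ℝ)+1)/m) ^ δ' * (m:ℝ) ^ δ' := by
                rw [← Real.mul_rpow (by positivity) hmpos.le, ← heq]
            _ ≤ (2-κ) * (m:ℝ) ^ δ' :=
                mul_le_mul_of_nonneg_right hr1 (Real.rpow_nonneg hmpos.le δ')
        have hXβ : (2*(m:ℝ)+1) ^ β ≤ (2-κ) * (m:ℝ) ^ β := by
          have heq : (2*(m:ℝ)+1) = ((2*(m:ℝ)+1)/m) * m := by field_simp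
          calc (2*(m:ℝ)+1) ^ β = ((2*(m:ℝ)+1)/m) ^ β * (m:ℝ) ^ β := by
                rw [← Real.mul_rpow (by positivity) hmpos.le, ← heq]
            _ ≤ (2-κ) * (m:ℝ) ^ β :=
                mul_le_mul_of_nonneg_right hr2 (Real.rpow_nonneg hmpos.le β)
        have hY : a * ((2*(m:ℝ)+1)/(2*N')) ^ β ≤ (2-κ) * (a * ((m:ℝ)/(2*N')) ^ β) := by
          have h1 : ((2*(m:ℝ)+1)/(2*N')) ^ β = (2*(m:ℝ)+1) ^ β / (2*(N':ℝ)) ^ β :=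
            Real.div_rpow (by positivity) hN'pos.le β
          have h2 : ((m:ℝ)/(2*N')) ^ β = (m:ℝ) ^ β / (2*(N':ℝ)) ^ β :=
            Real.div_rpow hmpos.le hN'pos.le β
          rw [h1, h2]
          have h3 : (0:ℝ) < (2*(N':ℝ)) ^ β := Real.rpow_pos_of_pos hN'pos β
          have h4 : (2*(m:ℝ)+1) ^ β / (2*(N':ℝ)) ^ β
              ≤ (2-κ) * (m:ℝ) ^ β / (2*(N':ℝ)) ^ β := by gcongr
          calc a * ((2*(m:ℝ)+1) ^ β / (2*(N':ℝ)) ^ β)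
              ≤ a * ((2-κ) * (m:ℝ) ^ β / (2*(N':ℝ)) ^ β) :=
                mul_le_mul_of_nonneg_left h4 ha0.le
            _ = (2-κ) * (a * ((m:ℝ) ^ β / (2*(N':ℝ)) ^ β)) := by ring
        have hcast : ((2*m+1 : ℕ) : ℝ) = 2*(m:ℝ)+1 := by push_cast; ring
        have hmin : F (2*m+1) = min ((2*(m:ℝ)+1) ^ δ') (a * ((2*(m:ℝ)+1)/(2*N')) ^ β) := by
          simp only [hFdef, hcast]
        rw [hmin]
        have h4 : (2-κ) * F m = min ((2-κ) * (m:ℝ) ^ δ') ((2-κ) * (a * ((m:ℝ)/(2*N')) ^ β)) := by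
          simp only [hFdef]
          rcases le_total ((m:ℝ) ^ δ') (a * ((m:ℝ)/(2*N')) ^ β) with h | h
          · rw [min_eq_left h, min_eq_left (mul_le_mul_of_nonneg_left h h2κpos.le)]
          · rw [min_eq_right h, min_eq_right (mul_le_mul_of_nonneg_left h h2κpos.le)]
        rw [h4]
        exact min_le_min hX hY
      -- choose s
      set s : ℕ := ⌈(F n + E)/c⌉₊ with hsdef
      have hs1 : 1 ≤ s := by
        rw [hsdef]
        exact Nat.one_le_iff_ne_zero.mpr (Nat.pos_iff_ne_zero.mp
          (Nat.ceil_pos.mpr (by positivity)))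
      have hsle : (s:ℝ) ≤ (F n + E)/c + 1 := (Nat.ceil_lt_add_one (by positivity)).le
      have hcs : F n + E ≤ c * s := by
        have h := Nat.le_ceil ((F n + E)/c)
        rw [div_le_iff₀ hc] at h
        rw [hsdef]; linarith
      have hFn2Fm : F n ≤ 2 * F m := by
        calc F n ≤ (2-κ) * F m := hFnm.trans hdouble
          _ ≤ 2 * F m := mul_le_mul_of_nonneg_right (by linarith) hFm0.le
      have hsm' : s ≤ m := by
        have hFm_le : F m ≤ (m:ℝ) ^ δ' := min_le_left _ _
        have h1 : (s:ℝ) ≤ (m:ℝ) := by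
          calc (s:ℝ) ≤ (F n + E)/c + 1 := hsle
            _ ≤ (2*(m:ℝ) ^ δ' + E)/c + 1 := by
                have hX : F n ≤ 2*(m:ℝ) ^ δ' := hFn2Fm.trans (by linarith)
                gcongr
            _ ≤ m := hsmm
        exact_mod_cast h1
      -- b s bound
      have hsS₀ : S₀ ≤ s := by
        have h1 : c * (S₀:ℝ) < c * s := by
          calc c * (S₀:ℝ) ≤ Λ := hΛS
            _ < F n + E := by linarith [hFmΛ.trans hFmn]
            _ ≤ c * s := hcs
        have := lt_of_mul_lt_mul_left h1 hc.le
        exact_mod_cast this.le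
      have hbs : b s ≤ (κ/2) * F m := by
        have h1 : b s ≤ η * s := hS₀ s hsS₀
        have h2 : η * s ≤ η * (K₁ * F m) := by
          apply mul_le_mul_of_nonneg_left _ hη0.le
          calc (s:ℝ) ≤ (F n + E)/c + 1 := hsle
            _ ≤ (2 * F m + E * F m)/c + F m := by
                have hE' : E ≤ E * F m :=
                  le_mul_of_one_le_right (by linarith) hFm1
                have hX : F n + E ≤ 2 * F m + E * F m := by linarith
                gcongr
            _ = K₁ * F m := by
                have hcne : c ≠ 0 := hc.ne'
                rw [hK₁def]; field_simp
        have h3 : η * (K₁ * F m) = (κ/2) * F m := by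
          have hK₁ne : K₁ ≠ 0 := hK₁0.ne'
          rw [hηdef]; field_simp
        exact h1.trans (h2.trans_eq h3)
      have hlog2 : Real.log 2 ≤ (κ/2) * F m := by
        have h1 : Real.log 2 ≤ 1 := by
          have := Real.log_le_sub_one_of_pos (by norm_num : (0:ℝ) < 2)
          linarith
        have h2 : 2/κ ≤ F m := hΛκ.trans hFmΛ
        have h3 : (1:ℝ) ≤ (κ/2) * F m := by
          rw [div_mul_eq_mul_div, le_div_iff₀ (by norm_num : (0:ℝ) < 2)]
          calc (1:ℝ) * 2 = κ * (2/κ) := by field_simp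
            _ ≤ κ * F m := mul_le_mul_of_nonneg_left h2 hκ0.le
        linarith
      have hexp : b s + Real.log 2 ≤ 2 * F m - F n := by
        have h1 : F n ≤ (2-κ) * F m := hFnm.trans hdouble
        have hr : (2-κ) * F m = 2 * F m - κ * F m := by ring
        linarith
      -- apply recursion
      have hrec' := hrec m s hs1 hsm'
      have hψm := ih m hmlt hmN'
      have hterm1 : Real.exp (b s) * ψ m ^ 2 ≤ Real.exp (-(F n)) / 2 := by
        have hsq : ψ m ^ 2 ≤ Real.exp (-(F m)) ^ 2 :=
          pow_le_pow_left₀ (hψpos m hm1).le hψm 2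
        calc Real.exp (b s) * ψ m ^ 2 ≤ Real.exp (b s) * Real.exp (-(F m)) ^ 2 :=
              mul_le_mul_of_nonneg_left hsq (Real.exp_nonneg _)
          _ = Real.exp (b s - 2 * F m) := by
              rw [sq, ← Real.exp_add, ← Real.exp_add]; ring_nf
          _ ≤ Real.exp (-(F n) - Real.log 2) := by
              rw [Real.exp_le_exp]; linarith
          _ = Real.exp (-(F n)) / 2 := by
              rw [Real.exp_sub, Real.exp_log (by norm_num : (0:ℝ) < 2)]
      have hterm2 : C * Real.exp (-c * s) ≤ Real.exp (-(F n)) / 2 := by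
        have h1 : -c * s ≤ -(F n) - E := by linarith
        have h2 : Real.exp (-c * s) ≤ Real.exp (-(F n) - E) := Real.exp_le_exp.mpr h1
        have h3 : 2*C ≤ Real.exp E := by
          calc 2*C = Real.exp (Real.log (2*C)) := (Real.exp_log (by positivity)).symm
            _ ≤ Real.exp E := Real.exp_le_exp.mpr (by linarith)
        have h4 : C * Real.exp (-(F n) - E) ≤ Real.exp (-(F n)) / 2 := by
          rw [Real.exp_sub]
          have h5 : C / Real.exp E ≤ 1/2 := by
            rw [div_le_div_iff₀ (Real.exp_pos E) (by norm_num : (0:ℝ) < 2)]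
            linarith
          calc C * (Real.exp (-(F n)) / Real.exp E)
              = (C / Real.exp E) * Real.exp (-(F n)) := by ring
            _ ≤ (1/2) * Real.exp (-(F n)) :=
                mul_le_mul_of_nonneg_right h5 (Real.exp_pos _).le
            _ = Real.exp (-(F n)) / 2 := by ring
        calc C * Real.exp (-c * s) ≤ C * Real.exp (-(F n) - E) :=
              mul_le_mul_of_nonneg_left h2 hC.le
          _ ≤ _ := h4
      calc ψ n ≤ ψ (2*m) := hψmono (2*m) n (by omega) hm2
        _ ≤ Real.exp (b s) * ψ m ^ 2 + C * Real.exp (-c * s) := hrec'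
        _ ≤ Real.exp (-(F n)) / 2 + Real.exp (-(F n)) / 2 := add_le_add hterm1 hterm2
        _ = Real.exp (-(F n)) := by ring
  -- conclusion
  have hfin : ∀ᶠ n : ℕ in atTop, (2*(N':ℝ)) ^ β / a ≤ (n:ℝ) ^ (β - δ) :=
    ((tendsto_rpow_atTop (by linarith : (0:ℝ) < β - δ)).comp
      tendsto_natCast_atTop_atTop).eventually_ge_atTop _
  obtain ⟨N₅, hN₅⟩ := Filter.eventually_atTop.mp hfin
  refine ⟨max N' N₅, fun n hn => ?_⟩
  have hnN' : N' ≤ n := le_trans (le_max_left _ _) hn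
  have hnN₅ : N₅ ≤ n := le_trans (le_max_right _ _) hn
  have hn1 : (1:ℝ) ≤ n := by exact_mod_cast le_trans hN'1 hnN'
  have hnpos : (0:ℝ) < n := by linarith
  have hδF : (n:ℝ) ^ δ ≤ F n := by
    apply le_min
    · exact Real.rpow_le_rpow_of_exponent_le hn1 hδδ'.le
    · have h1 := hN₅ n hnN₅
      have hβsplit : (n:ℝ) ^ β = (n:ℝ) ^ δ * (n:ℝ) ^ (β - δ) := by
        rw [← Real.rpow_add hnpos, show δ + (β - δ) = β by ring]
      have hdiv : a * ((n:ℝ)/(2*N')) ^ β = a * ((n:ℝ) ^ β / (2*(N':ℝ)) ^ β) := by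
        rw [Real.div_rpow hnpos.le hN'pos.le]
      have h2N'β : (0:ℝ) < (2*(N':ℝ)) ^ β := Real.rpow_pos_of_pos hN'pos β
      rw [hdiv, hβsplit]
      rw [div_le_iff₀ ha0] at h1
      have hre : a * ((n:ℝ) ^ δ * (n:ℝ) ^ (β - δ) / (2*(N':ℝ)) ^ β)
          = (n:ℝ) ^ δ * ((n:ℝ) ^ (β - δ) * a / (2*(N':ℝ)) ^ β) := by ring
      rw [hre]
      have h6 : (1:ℝ) ≤ (n:ℝ) ^ (β - δ) * a / (2*(N':ℝ)) ^ β := by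
        rw [le_div_iff₀ h2N'β]; linarith
      calc (n:ℝ) ^ δ = (n:ℝ) ^ δ * 1 := (mul_one _).symm
        _ ≤ (n:ℝ) ^ δ * ((n:ℝ) ^ (β - δ) * a / (2*(N':ℝ)) ^ β) :=
            mul_le_mul_of_nonneg_left h6 (Real.rpow_nonneg hnpos.le δ)
  exact (key n hnN').trans (Real.exp_le_exp.mpr (by linarith))
end

section
/- Let a : ℕ → ℝ be nondecreasing with a(n) → ∞ as n → ∞. Suppose that for every ε ∈ (0,1) there exists N such that a(2n) ≥ (2 − ε) · a(n) for all n ≥ N. Then for every δ ∈ (0,1), a(n)/n^δ → ∞ as n → ∞. -/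
/-!
Fix `β ∈ (δ, 1)`. Applying the hypothesis with `ε = 2 - 2 ^ β` gives `a (2 n) ≥ 2 ^ β a n`
eventually, so from a point `n₀` with `a n₀ > 0` the values along `2 ^ k n₀` grow at least like
`(2 ^ β) ^ k`. Monotonicity fills the dyadic gaps, so `a n ≥ c n ^ β` for some `c > 0`, and
`a n / n ^ δ ≥ c n ^ (β - δ) → ∞`.
-/

open Filter Real

lemma Nat.exists_two_pow_mul_le_lt_two_pow_succ_mul {n₀ n : ℕ} (h₀ : 0 < n₀) (h : n₀ ≤ n) :
    ∃ k : ℕ, 2 ^ k * n₀ ≤ n ∧ n < 2 ^ (k + 1) * n₀ := by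
  refine ⟨Nat.log 2 (n / n₀), ?_, ?_⟩
  · calc 2 ^ Nat.log 2 (n / n₀) * n₀ ≤ n / n₀ * n₀ :=
          Nat.mul_le_mul_right _ (Nat.pow_log_le_self 2 (Nat.div_pos h h₀).ne')
      _ ≤ n := Nat.div_mul_le_self n n₀
  · exact (Nat.div_lt_iff_lt_mul h₀).mp (Nat.lt_pow_succ_log_self one_lt_two _)

lemma pow_mul_le_apply_two_pow_mul {a : ℕ → ℝ} {c : ℝ} {N n₀ : ℕ} (hc : 0 ≤ c)
    (h : ∀ n, N ≤ n → c * a n ≤ a (2 * n)) (hn₀ : N ≤ n₀) (k : ℕ) :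
    c ^ k * a n₀ ≤ a (2 ^ k * n₀) := by
  induction k with
  | zero => simp
  | succ k ih =>
    calc c ^ (k + 1) * a n₀ = c * (c ^ k * a n₀) := by ring
      _ ≤ c * a (2 ^ k * n₀) := mul_le_mul_of_nonneg_left ih hc
      _ ≤ a (2 * (2 ^ k * n₀)) := h _ (hn₀.trans (Nat.le_mul_of_pos_left _ (by positivity)))
      _ = a (2 ^ (k + 1) * n₀) := by rw [pow_succ, mul_comm _ 2, mul_assoc]

lemma exists_pos_mul_rpow_le_of_rpow_mul_le {a : ℕ → ℝ} {β : ℝ} {N : ℕ} (hβ : 0 ≤ β)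
    (hmono : MonotoneOn a (Set.Ici 1)) (hpos : ∀ᶠ n in atTop, 0 < a n)
    (h : ∀ n, N ≤ n → 2 ^ β * a n ≤ a (2 * n)) :
    ∃ c > 0, ∀ᶠ n : ℕ in atTop, c * (n : ℝ) ^ β ≤ a n := by
  obtain ⟨n₀, hn₀N, hn₀, ha₀⟩ : ∃ n₀, N ≤ n₀ ∧ 1 ≤ n₀ ∧ 0 < a n₀ :=
    ((eventually_ge_atTop N).and ((eventually_ge_atTop 1).and hpos)).exists
  set C : ℝ := (2 * n₀ : ℝ) ^ β
  have hC : 0 < C := by positivity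
  refine ⟨a n₀ / C, div_pos ha₀ hC, ?_⟩
  filter_upwards [eventually_ge_atTop n₀] with n hn
  obtain ⟨k, hlow, hhigh⟩ := Nat.exists_two_pow_mul_le_lt_two_pow_succ_mul hn₀ hn
  have hgrowth : (2 ^ β) ^ k * a n₀ ≤ a n :=
    (pow_mul_le_apply_two_pow_mul (by positivity) h hn₀N k).trans
      (hmono (hn₀.trans (Nat.le_mul_of_pos_left _ (by positivity))) (hn₀.trans hn) hlow)
  have hsize : (n : ℝ) ^ β ≤ (2 ^ β) ^ k * C := by
    calc (n : ℝ) ^ β ≤ ((2 ^ (k + 1) * n₀ : ℕ) : ℝ) ^ β :=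
          rpow_le_rpow (by positivity) (by exact_mod_cast hhigh.le) hβ
      _ = (2 ^ β) ^ k * C := by
          rw [rpow_pow_comm zero_le_two, ← mul_rpow (by positivity) (by positivity)]
          push_cast
          ring_nf
  calc a n₀ / C * (n : ℝ) ^ β ≤ a n₀ / C * ((2 ^ β) ^ k * C) :=
        mul_le_mul_of_nonneg_left hsize (div_pos ha₀ hC).le
    _ = (2 ^ β) ^ k * a n₀ := by field_simp
    _ ≤ a n := hgrowth

lemma tendsto_div_rpow_atTop_of_mul_rpow_le {a : ℕ → ℝ} {c β δ : ℝ} (hc : 0 < c) (hδβ : δ < β)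
    (h : ∀ᶠ n : ℕ in atTop, c * (n : ℝ) ^ β ≤ a n) :
    Tendsto (fun n : ℕ => a n / (n : ℝ) ^ δ) atTop atTop := by
  have hlim : Tendsto (fun n : ℕ => c * (n : ℝ) ^ (β - δ)) atTop atTop :=
    ((tendsto_rpow_atTop (sub_pos.2 hδβ)).comp tendsto_natCast_atTop_atTop).const_mul_atTop hc
  refine tendsto_atTop_mono' _ ?_ hlim
  filter_upwards [h, eventually_gt_atTop 0] with n hn hn₀
  have hn₀' : (0 : ℝ) < n := by exact_mod_cast hn₀
  rw [rpow_sub hn₀', le_div_iff₀ (by positivity), mul_assoc, div_mul_cancel₀ _ (by positivity)]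
  exact hn

/-- Let `a : ℕ → ℝ` be nondecreasing (on positive integers) with
`a(n) → ∞`. Suppose that for every `ε ∈ (0,1)` there exists `N` such that
`a(2n) ≥ (2 - ε) a(n)` for all `n ≥ N`. Then for every `δ ∈ (0,1)`,
`a(n) / n^δ → ∞`. -/
theorem stmt3 (a : ℕ → ℝ)
    (hmono : ∀ m n : ℕ, 1 ≤ m → m ≤ n → a m ≤ a n)
    (htop : Filter.Tendsto a Filter.atTop Filter.atTop)
    (hdouble : ∀ ε : ℝ, 0 < ε → ε < 1 →
      ∃ N : ℕ, ∀ n : ℕ, N ≤ n → (2 - ε) * a n ≤ a (2 * n)) :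
    ∀ δ : ℝ, 0 < δ → δ < 1 →
      Filter.Tendsto (fun n : ℕ => a n / (n : ℝ) ^ δ) Filter.atTop Filter.atTop := by
  intro δ hδ₀ hδ₁
  obtain ⟨β, hδβ, hβ⟩ : ∃ β, δ < β ∧ β < 1 := ⟨(δ + 1) / 2, by linarith, by linarith⟩
  have hβ₂ : (2 : ℝ) ^ β < 2 := by simpa using rpow_lt_rpow_of_exponent_lt one_lt_two hβ
  have hβ₁ : 1 < (2 : ℝ) ^ β := one_lt_rpow one_lt_two (hδ₀.trans hδβ)
  obtain ⟨N, hN⟩ := hdouble (2 - 2 ^ β) (by linarith) (by linarith)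
  obtain ⟨c, hc, hca⟩ := exists_pos_mul_rpow_le_of_rpow_mul_le (hδ₀.trans hδβ).le
    (fun m hm n _ hmn => hmono m n hm hmn) (htop.eventually_gt_atTop 0)
    (fun n hn => by simpa using hN n hn)
  exact tendsto_div_rpow_atTop_of_mul_rpow_le hc hδβ hca
end

section
/- Let a : ℕ → ℝ satisfy a(n) → ∞ as n → ∞. Let α ∈ (0, log 2) and γ ∈ (0, 1 − α/log 2), and suppose there exists N₁ ≥ 2 such that for all n ≥ N₁ one has a(n) > 1 and a(2n) ≥ 2 · a(n) · (1 − α/log a(n)). Then there exist a real A > 0 and an integer N ≥ N₁ such that for every integer k ≥ 0, a(2^k N) ≥ A · 2^k N / (log(2^k N))^{1−γ}. -/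
/-!
Put `s = 1 - γ` and `f(n) = a(n) (log n)^s / n`. By Bernoulli's inequality `(1 - x)^s ≤ 1 - s x`,
the doubling hypothesis gives `f(n) ≤ f(2n)` as soon as `α log(2n) ≤ s log 2 · log a(n)`.
Along `n = 2^k N` the right side grows at least like `s log 2 · e k` for every `e < log 2`,
because `a → ∞` makes the growth factor `2 (1 - α / log a)` tend to `2`, while the left side grows
like `α log 2 · k`. Since `α < s log 2`, the condition holds for all large `k`, so `f(2^k N)` is
eventually nondecreasing and hence bounded below by a positive constant.
-/

open Real Filter Topology

lemma rpow_le_one_sub_div_mul_rpow_add {s ℓ l α L : ℝ} (hs₀ : 0 ≤ s) (hs₁ : s ≤ 1)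
    (hℓ : 0 < ℓ) (hl : 0 ≤ l) (hL : 0 < L) (h : α * (ℓ + l) ≤ s * l * L) :
    ℓ ^ s ≤ (1 - α / L) * (ℓ + l) ^ s := by
  have hℓl : 0 < ℓ + l := by linarith
  have hbernoulli : (ℓ / (ℓ + l)) ^ s ≤ 1 - s * (l / (ℓ + l)) := by
    have hx : -1 ≤ -(l / (ℓ + l)) := by
      rw [neg_le_neg_iff, div_le_one hℓl]; linarith
    convert rpow_one_add_le_one_add_mul_self hx hs₀ hs₁ using 2
    · field_simp; ring
    · ring
  have hαL : α / L ≤ s * (l / (ℓ + l)) := by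
    rw [div_le_iff₀ hL, mul_div_assoc', div_mul_eq_mul_div, le_div_iff₀ hℓl]
    linarith
  calc ℓ ^ s = (ℓ / (ℓ + l)) ^ s * (ℓ + l) ^ s := by
        rw [← mul_rpow (by positivity) hℓl.le, div_mul_cancel₀ _ hℓl.ne']
    _ ≤ (1 - α / L) * (ℓ + l) ^ s := by gcongr; linarith

lemma mul_log_rpow_div_le_of_doubling {s α n x y : ℝ} (hs₀ : 0 ≤ s) (hs₁ : s ≤ 1) (hn : 1 < n)
    (hx : 1 < x) (hy : 2 * x * (1 - α / log x) ≤ y) (h : α * log (2 * n) ≤ s * log 2 * log x) :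
    x * log n ^ s / n ≤ y * log (2 * n) ^ s / (2 * n) := by
  have hlog : log (2 * n) = log n + log 2 := by
    rw [log_mul two_ne_zero (by linarith), add_comm]
  have hkey : log n ^ s ≤ (1 - α / log x) * log (2 * n) ^ s := by
    rw [hlog] at h ⊢
    exact rpow_le_one_sub_div_mul_rpow_add hs₀ hs₁ (log_pos hn) (log_pos one_lt_two).le
      (log_pos hx) (by linarith)
  have hn₀ : 0 < n := by linarith
  calc x * log n ^ s / n ≤ x * ((1 - α / log x) * log (2 * n) ^ s) / n := by gcongr
    _ = 2 * x * (1 - α / log x) * log (2 * n) ^ s / (2 * n) := by field_simp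
    _ ≤ y * log (2 * n) ^ s / (2 * n) := by
        gcongr
        exact rpow_nonneg (log_nonneg (by linarith)) s

lemma exists_pos_forall_le_of_eventually_le_succ {f : ℕ → ℝ} (hpos : ∀ k, 0 < f k)
    (hf : ∀ᶠ k in atTop, f k ≤ f (k + 1)) : ∃ A, 0 < A ∧ ∀ k, A ≤ f k := by
  obtain ⟨K, hK⟩ := eventually_atTop.mp hf
  have hne : (Finset.range (K + 1)).Nonempty := ⟨K, Finset.self_mem_range_succ K⟩
  refine ⟨(Finset.range (K + 1)).inf' hne f, (Finset.lt_inf'_iff hne).mpr fun k _ => hpos k,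
    fun k => ?_⟩
  rcases le_total k K with hk | hk
  · exact Finset.inf'_le f (Finset.mem_range_succ_iff.mpr hk)
  · exact (Finset.inf'_le f (Finset.self_mem_range_succ K)).trans
      (monotoneOn_nat_Ici_of_le_succ hK Set.self_mem_Ici hk hk)

lemma eventually_mul_le_of_eventually_add_le {u : ℕ → ℝ} {d e : ℝ}
    (hu : ∀ᶠ k in atTop, u k + d ≤ u (k + 1)) (hed : e < d) :
    ∀ᶠ k : ℕ in atTop, e * k ≤ u k := by
  obtain ⟨K, hK⟩ := eventually_atTop.mp hu
  have hmono : MonotoneOn (fun k : ℕ => u k - d * k) (Set.Ici K) :=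
    monotoneOn_nat_Ici_of_le_succ fun k hk => by push_cast; linarith [hK k hk]
  filter_upwards [eventually_ge_atTop K, (tendsto_natCast_atTop_atTop.const_mul_atTop
    (sub_pos.2 hed)).eventually_ge_atTop (d * K - u K)] with k hk hlin
  have := hmono Set.self_mem_Ici hk hk
  dsimp only at this
  linarith

lemma eventually_log_add_le_log_succ {b : ℕ → ℝ} {α d : ℝ} (hb : Tendsto b atTop atTop)
    (hstep : ∀ᶠ k in atTop, 2 * b k * (1 - α / log (b k)) ≤ b (k + 1)) (hd : d < log 2) :
    ∀ᶠ k in atTop, log (b k) + d ≤ log (b (k + 1)) := by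
  have hfactor : Tendsto (fun k => 2 * (1 - α / log (b k))) atTop (𝓝 2) := by
    have h := (((tendsto_log_atTop.comp hb).inv_tendsto_atTop.const_mul α).const_sub 1).const_mul 2
    simpa [div_eq_mul_inv] using h
  filter_upwards [hstep, hfactor.eventually_const_lt ((lt_log_iff_exp_lt two_pos).mp hd),
    hb.eventually_gt_atTop 0] with k hk hr hpos
  calc log (b k) + d = log (exp d * b k) := by
        rw [log_mul (exp_pos d).ne' hpos.ne', log_exp, add_comm]
    _ ≤ log (b (k + 1)) := log_le_log (by positivity) (by nlinarith)

lemma eventually_mul_le_log_of_doubling {b : ℕ → ℝ} {α e : ℝ} (hb : Tendsto b atTop atTop)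
    (hstep : ∀ᶠ k in atTop, 2 * b k * (1 - α / log (b k)) ≤ b (k + 1)) (he : e < log 2) :
    ∀ᶠ k : ℕ in atTop, e * k ≤ log (b k) := by
  obtain ⟨d, hed, hd⟩ := exists_between he
  exact eventually_mul_le_of_eventually_add_le (eventually_log_add_le_log_succ hb hstep hd) hed

lemma exists_pos_le_mul_log_rpow_div_of_doubling {b : ℕ → ℝ} {α s : ℝ} {N : ℕ} (hN : 2 ≤ N)
    (hs₀ : 0 < s) (hs₁ : s ≤ 1) (hαs : α < s * log 2) (hb : Tendsto b atTop atTop)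
    (hb₁ : ∀ k, 1 < b k) (hstep : ∀ k, 2 * b k * (1 - α / log (b k)) ≤ b (k + 1)) :
    ∃ A, 0 < A ∧ ∀ k : ℕ, A ≤ b k * log (2 ^ k * N) ^ s / (2 ^ k * N) := by
  have hl2 : 0 < log 2 := log_pos one_lt_two
  have hN' : (2 : ℝ) ≤ N := by exact_mod_cast hN
  have hn : ∀ k : ℕ, (1 : ℝ) < 2 ^ k * N := fun k => by
    nlinarith [one_le_pow₀ (M₀ := ℝ) one_le_two (n := k)]
  have hlog_n : ∀ k : ℕ, log (2 ^ k * N) = k * log 2 + log N := fun k => by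
    rw [log_mul (by positivity) (by positivity), log_pow]
  obtain ⟨e, hαe, he⟩ : ∃ e, α < s * e ∧ e < log 2 := by
    obtain ⟨e, h₁, h₂⟩ := exists_between ((div_lt_iff₀' hs₀).mpr hαs)
    exact ⟨e, (div_lt_iff₀' hs₀).mp h₁, h₂⟩
  have hlinear : ∀ᶠ k : ℕ in atTop, α * log (2 * (2 ^ k * N)) ≤ s * log 2 * (e * k) := by
    filter_upwards [(tendsto_natCast_atTop_atTop.const_mul_atTop
      (mul_pos (sub_pos.2 hαe) hl2)).eventually_ge_atTop (α * (log 2 + log N))] with k hk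
    rw [← mul_assoc, ← pow_succ', hlog_n]
    push_cast
    nlinarith
  set f : ℕ → ℝ := fun k => b k * log (2 ^ k * N) ^ s / (2 ^ k * N)
  have hf_pos : ∀ k, 0 < f k := fun k =>
    div_pos (mul_pos (one_pos.trans (hb₁ k)) (rpow_pos_of_pos (log_pos (hn k)) s))
      (one_pos.trans (hn k))
  have hf_mono : ∀ᶠ k in atTop, f k ≤ f (k + 1) := by
    filter_upwards [eventually_mul_le_log_of_doubling hb (.of_forall hstep) he, hlinear]
      with k hka hkl
    simp only [f, pow_succ', mul_assoc]
    exact mul_log_rpow_div_le_of_doubling hs₀.le hs₁ (hn k) (hb₁ k) (hstep k)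
      (hkl.trans (mul_le_mul_of_nonneg_left hka (by positivity)))
  exact exists_pos_forall_le_of_eventually_le_succ hf_pos hf_mono

theorem stmt4_general (a : ℕ → ℝ) (α γ : ℝ) (N₁ : ℕ)
    (htop : Filter.Tendsto a Filter.atTop Filter.atTop)
    (hα : 0 < α)
    (hγ : 0 < γ) (hγ' : γ < 1 - α / Real.log 2)
    (hN₁ : 2 ≤ N₁)
    (hgrow : ∀ n : ℕ, N₁ ≤ n →
      1 < a n ∧ 2 * a n * (1 - α / Real.log (a n)) ≤ a (2 * n)) :
    ∃ A : ℝ, 0 < A ∧ ∃ N : ℕ, N₁ ≤ N ∧ ∀ k : ℕ,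
      A * ((2 ^ k * N : ℕ) : ℝ) / (Real.log ((2 ^ k * N : ℕ) : ℝ)) ^ (1 - γ)
        ≤ a (2 ^ k * N) := by
  have hl2 : 0 < log 2 := log_pos one_lt_two
  have hαs : α < (1 - γ) * log 2 := by
    have := (div_lt_iff₀ hl2).mp (show α / log 2 < 1 - γ by linarith); linarith
  have hN₁n : ∀ k, N₁ ≤ 2 ^ k * N₁ := fun k => Nat.le_mul_of_pos_left _ (by positivity)
  have hb : Tendsto (fun k => a (2 ^ k * N₁)) atTop atTop :=
    htop.comp (tendsto_atTop_mono (fun k => Nat.lt_two_pow_self.le.trans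
      (Nat.le_mul_of_pos_right _ (by omega))) tendsto_id)
  obtain ⟨A, hA, hAf⟩ := exists_pos_le_mul_log_rpow_div_of_doubling hN₁
    (pos_of_mul_pos_left (hα.trans hαs) hl2.le) (by linarith) hαs hb
    (fun k => (hgrow _ (hN₁n k)).1)
    (fun k => by simpa only [pow_succ', mul_assoc] using (hgrow _ (hN₁n k)).2)
  refine ⟨A, hA, N₁, le_rfl, fun k => ?_⟩
  have hn : (1 : ℝ) < (2 ^ k * N₁ : ℕ) := by exact_mod_cast hN₁.trans (hN₁n k)
  have hAk := hAf k
  push_cast at hn ⊢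
  rw [le_div_iff₀ (one_pos.trans hn)] at hAk
  rw [div_le_iff₀ (rpow_pos_of_pos (log_pos hn) _)]
  linarith

/-- Let `a : ℕ → ℝ` tend to infinity, let `α ∈ (0, log 2)` and
`γ ∈ (0, 1 - α/log 2)`, and suppose there is `N₁ ≥ 2` such that for all `n ≥ N₁` one has
`a(n) > 1` and `a(2n) ≥ 2 a(n) (1 - α / log a(n))`. Then there exist `A > 0` and an integer
`N ≥ N₁` such that for every `k ≥ 0`, `a(2^k N) ≥ A · 2^k N / (log (2^k N))^{1-γ}`. -/
theorem stmt4 (a : ℕ → ℝ) (α γ : ℝ) (N₁ : ℕ)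
    (htop : Filter.Tendsto a Filter.atTop Filter.atTop)
    (hα : 0 < α) (hα' : α < Real.log 2)
    (hγ : 0 < γ) (hγ' : γ < 1 - α / Real.log 2)
    (hN₁ : 2 ≤ N₁)
    (hgrow : ∀ n : ℕ, N₁ ≤ n →
      1 < a n ∧ 2 * a n * (1 - α / Real.log (a n)) ≤ a (2 * n)) :
    ∃ A : ℝ, 0 < A ∧ ∃ N : ℕ, N₁ ≤ N ∧ ∀ k : ℕ,
      A * ((2 ^ k * N : ℕ) : ℝ) / (Real.log ((2 ^ k * N : ℕ) : ℝ)) ^ (1 - γ)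
        ≤ a (2 ^ k * N) :=
  stmt4_general a α γ N₁ htop hα hγ hγ' hN₁ hgrow
end

section
/- Let ℓ : ℕ → ℝ be positive, let M ≥ 1 be an integer with ℓ(M) ≤ e^{−1}, and suppose ℓ(2n) ≤ ℓ(n)² for all integers n ≥ M. Suppose in addition there is a nonnegative function h : ℕ → ℝ with h(n)/n → 0 such that ℓ(m) ≤ e^{h(n)} · ℓ(n) whenever M ≤ n ≤ m ≤ 2n. Then ℓ decays exponentially: there exist c > 0 and N such that ℓ(n) ≤ exp(−c n) for all n ≥ N. -/
/-! Squaring along the dyadic sequence `2ᵏM` gives `ℓ(2ᵏM) ≤ e^{-2ᵏ}`. Every `n ≥ M` lies in a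
block `[m, 2m]` with `m = 2ᵏM`, and there the comparison hypothesis costs only the factor
`e^{h(m)}`, which sub-linearity keeps below `e^{2ᵏ/2}`; hence `ℓ(n) ≤ e^{-2ᵏ/2} ≤ e^{-n/(4M)}`. -/

open Filter Topology

lemma apply_two_pow_mul_le_pow_two_pow {ℓ : ℕ → ℝ} {M : ℕ}
    (hnonneg : ∀ n, M ≤ n → 0 ≤ ℓ n) (hrec : ∀ n, M ≤ n → ℓ (2 * n) ≤ ℓ n ^ 2) (k : ℕ) :
    ℓ (2 ^ k * M) ≤ ℓ M ^ 2 ^ k := by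
  induction k with
  | zero => simp
  | succ k ih =>
    have hMk : M ≤ 2 ^ k * M := Nat.le_mul_of_pos_left M (by positivity)
    calc ℓ (2 ^ (k + 1) * M) = ℓ (2 * (2 ^ k * M)) := by ring_nf
      _ ≤ ℓ (2 ^ k * M) ^ 2 := hrec _ hMk
      _ ≤ (ℓ M ^ 2 ^ k) ^ 2 := pow_le_pow_left₀ (hnonneg _ hMk) ih 2
      _ = ℓ M ^ 2 ^ (k + 1) := by ring

lemma apply_two_pow_mul_le_exp {ℓ : ℕ → ℝ} {M : ℕ}
    (hnonneg : ∀ n, M ≤ n → 0 ≤ ℓ n) (hℓM : ℓ M ≤ Real.exp (-1))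
    (hrec : ∀ n, M ≤ n → ℓ (2 * n) ≤ ℓ n ^ 2) (k : ℕ) :
    ℓ (2 ^ k * M) ≤ Real.exp (-2 ^ k) :=
  calc ℓ (2 ^ k * M) ≤ ℓ M ^ 2 ^ k := apply_two_pow_mul_le_pow_two_pow hnonneg hrec k
    _ ≤ Real.exp (-1) ^ 2 ^ k := pow_le_pow_left₀ (hnonneg M le_rfl) hℓM _
    _ = Real.exp (-2 ^ k) := by rw [← Real.exp_nat_mul]; push_cast; ring_nf

lemma Nat.exists_two_pow_mul_le_lt_two_mul {M n : ℕ} (hM : 0 < M) (hn : M ≤ n) :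
    ∃ k, 2 ^ k * M ≤ n ∧ n < 2 * (2 ^ k * M) := by
  have hq : n / M ≠ 0 := (Nat.div_pos hn hM).ne'
  refine ⟨Nat.log 2 (n / M), ?_, ?_⟩
  · exact (Nat.le_div_iff_mul_le hM).mp (Nat.pow_log_le_self 2 hq)
  · rw [← mul_assoc, ← pow_succ']
    exact (Nat.div_lt_iff_lt_mul hM).mp (Nat.lt_pow_succ_log_self one_lt_two _)

lemma eventually_lt_mul_of_tendsto_div_zero {h : ℕ → ℝ}
    (hh : Tendsto (fun n : ℕ => h n / n) atTop (𝓝 0)) {ε : ℝ} (hε : 0 < ε) :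
    ∀ᶠ n : ℕ in atTop, h n < ε * n := by
  filter_upwards [hh.eventually (gt_mem_nhds hε), eventually_gt_atTop 0] with n hn hn0
  rwa [div_lt_iff₀ (by exact_mod_cast hn0)] at hn

theorem stmt6_general (ℓ h : ℕ → ℝ) (M : ℕ)
    (hpos : ∀ n : ℕ, 1 ≤ n → 0 < ℓ n)
    (hM : 1 ≤ M) (hℓM : ℓ M ≤ Real.exp (-1))
    (hrec : ∀ n : ℕ, M ≤ n → ℓ (2 * n) ≤ (ℓ n) ^ 2)
    (hhsub : Filter.Tendsto (fun n : ℕ => h n / n) Filter.atTop (nhds 0))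
    (hcomp : ∀ n m : ℕ, M ≤ n → n ≤ m → m ≤ 2 * n → ℓ m ≤ Real.exp (h n) * ℓ n) :
    ∃ c : ℝ, 0 < c ∧ ∃ N : ℕ, ∀ n : ℕ, N ≤ n → ℓ n ≤ Real.exp (-c * n) := by
  have hMpos : (0 : ℝ) < M := by exact_mod_cast hM
  obtain ⟨N₀, hN₀⟩ := eventually_atTop.mp
    (eventually_lt_mul_of_tendsto_div_zero hhsub (by positivity : (0 : ℝ) < 1 / (2 * M)))
  refine ⟨1 / (4 * M), by positivity, max (2 * N₀) M, fun n hn => ?_⟩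
  obtain ⟨k, hmn, hnm⟩ := Nat.exists_two_pow_mul_le_lt_two_mul hM (le_of_max_le_right hn)
  have hm : ((2 ^ k * M : ℕ) : ℝ) = 2 ^ k * M := by push_cast; rfl
  have hnR : (n : ℝ) < 2 * (2 ^ k * M) := by rw [← hm]; exact_mod_cast hnm
  have hhm : h (2 ^ k * M) < 2 ^ k / 2 :=
    calc h (2 ^ k * M) < 1 / (2 * M) * (2 ^ k * M) := hm ▸ hN₀ (2 ^ k * M) (by omega)
      _ = 2 ^ k / 2 := by field_simp
  have hℓm := apply_two_pow_mul_le_exp (fun n hn => (hpos n (hM.trans hn)).le) hℓM hrec k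
  calc ℓ n ≤ Real.exp (h (2 ^ k * M)) * ℓ (2 ^ k * M) :=
        hcomp _ n (Nat.le_mul_of_pos_left M (by positivity)) hmn hnm.le
    _ ≤ Real.exp (h (2 ^ k * M)) * Real.exp (-2 ^ k) := by gcongr
    _ ≤ Real.exp (-(1 / (4 * M)) * n) := by
      have : n / (4 * M) < (2 : ℝ) ^ k / 2 := by
        rw [div_lt_iff₀ (by positivity)]; linarith
      rw [← Real.exp_add, Real.exp_le_exp, neg_mul, one_div_mul_eq_div]
      linarith

/-- Let `ℓ : ℕ → ℝ` be positive, `M ≥ 1` with `ℓ(M) ≤ e⁻¹` and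
`ℓ(2n) ≤ ℓ(n)²` for all `n ≥ M`. Suppose in addition there is a nonnegative sub-linear
`h : ℕ → ℝ` such that `ℓ(m) ≤ e^{h(n)} ℓ(n)` whenever `M ≤ n ≤ m ≤ 2n`. Then `ℓ` decays
exponentially. -/
theorem stmt6 (ℓ h : ℕ → ℝ) (M : ℕ)
    (hpos : ∀ n : ℕ, 1 ≤ n → 0 < ℓ n)
    (hM : 1 ≤ M) (hℓM : ℓ M ≤ Real.exp (-1))
    (hrec : ∀ n : ℕ, M ≤ n → ℓ (2 * n) ≤ (ℓ n) ^ 2)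
    (hhnonneg : ∀ n : ℕ, 1 ≤ n → 0 ≤ h n)
    (hhsub : Filter.Tendsto (fun n : ℕ => h n / n) Filter.atTop (nhds 0))
    (hcomp : ∀ n m : ℕ, M ≤ n → n ≤ m → m ≤ 2 * n → ℓ m ≤ Real.exp (h n) * ℓ n) :
    ∃ c : ℝ, 0 < c ∧ ∃ N : ℕ, ∀ n : ℕ, N ≤ n → ℓ n ≤ Real.exp (-c * n) :=
  stmt6_general ℓ h M hpos hM hℓM hrec hhsub hcomp
end

section
/- Let G be an infinite, connected, locally finite simple graph on a countable vertex set V satisfying the sphere condition. Let D ≥ 2 be an integer and let η = (η_v)_{v∈V} be i.i.d. random variables, each uniformly distributed on {1, …, D}. Then: (i) almost surely, for every pair of distinct u, v ∈ V the sequences Z_u(η) and Z_v(η) in ℕ^ℕ are distinct, so the relation u ⪯_η v defined by Z_u(η) ≤_lex Z_v(η) is almost surely a total order on V; and (ii) for all distinct u, v ∈ V and every integer r ≥ 0, P(R_{u,v}(η) > r) ≤ D^{−r}, where R_{u,v}(η) is the least r such that the truth value of 'Z_u(η') ≤_lex Z_v(η')' is the same for every η' ∈ {1,…,D}^V agreeing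 with η on B(u,r) ∪ B(v,r) (and R_{u,v}(η) = ∞ if no such r exists). -/
open MeasureTheory ProbabilityTheory ENNReal

/-- `sphereSum G η v n` is `Z_{v,n}(η) = ∑_{w : dist(w,v) = n} η_w`, where
`η : V → Fin D` encodes a configuration with values in `{1, …, D}` via
`w ↦ (η w : ℕ) + 1`. The sum is a finite sum (`finsum`) by local finiteness. -/
noncomputable def sphereSum {V : Type*} (G : SimpleGraph V) {D : ℕ}
    (η : V → Fin D) (v : V) (n : ℕ) : ℕ :=
  ∑ᶠ w ∈ {w : V | G.dist w v = n}, ((η w : ℕ) + 1)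

/-- The lexicographic order on `ℕ^ℕ`: `f ≤_lex g` iff `f = g` or `f` is smaller than `g`
at the first coordinate where they differ. -/
def lexLE (f g : ℕ → ℕ) : Prop :=
  f = g ∨ ∃ n : ℕ, (∀ m : ℕ, m < n → f m = g m) ∧ f n < g n

/-- `orderDetermined G u v r η` states that the truth value of
`Z_u(η') ≤_lex Z_v(η')` is the same for every `η'` agreeing with `η` on
`B(u,r) ∪ B(v,r)`; i.e. the relative `⪯_η`-order of `u` and `v` is determined by
`η` restricted to `B(u,r) ∪ B(v,r)`.  The coding radius `R_{u,v}(η)` is the least `r`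
with this property, so `R_{u,v}(η) > r ↔ ¬ orderDetermined G u v r η` (determinacy
being monotone in `r`). -/
def orderDetermined {V : Type*} (G : SimpleGraph V) {D : ℕ}
    (u v : V) (r : ℕ) (η : V → Fin D) : Prop :=
  ∀ η' : V → Fin D, (∀ w : V, (G.dist w u ≤ r ∨ G.dist w v ≤ r) → η' w = η w) →
    (lexLE (sphereSum G η' u) (sphereSum G η' v) ↔
      lexLE (sphereSum G η u) (sphereSum G η v))

/-!
Fix `u ≠ v` and `r`. The sphere condition gives a vertex `w₀` with `dist w₀ v = r + 1` and
`dist w₀ u > r + 1`. The event `Z_{u,n} = Z_{v,n}` for all `n ≤ r`, as well as `Z_{u,r+1}` and the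
part of `Z_{v,r+1}` not coming from `w₀`, depend only on the spins off `w₀`; since `η_{w₀}` enters
`Z_{v,r+1}` with coefficient one, agreement at radius `r + 1` pins `η_{w₀}` to one value, which has
conditional probability at most `1/D`. Inductively, the sphere sums of `u` and `v` agree up to
radius `r` with probability at most `D^{-r}`. Off this event they differ at some radius `n ≤ r`,
and the lexicographic comparison is then decided by the spins in the two balls of radius `r`.
Letting `r → ∞` and taking a countable union over pairs gives (i).
-/

section LexLE

variable {f g f' g' : ℕ → ℕ}

lemma lexLE_iff_toLex_le : lexLE f g ↔ toLex f ≤ toLex g := by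
  rw [le_iff_lt_or_eq, lexLE, or_comm, toLex_inj]
  rfl

lemma lexLE_iff_lt_of_eq_of_ne {n : ℕ} (heq : ∀ m < n, f m = g m) (hne : f n ≠ g n) :
    lexLE f g ↔ f n < g n :=
  ⟨fun h => (Pi.apply_le_of_toLex (lexLE_iff_toLex_le.1 h) heq).lt_of_ne hne,
    fun h => Or.inr ⟨n, heq, h⟩⟩

lemma lexLE_congr_of_ne {r : ℕ} (hf : ∀ m ≤ r, f' m = f m) (hg : ∀ m ≤ r, g' m = g m)
    (hne : ∃ n ≤ r, f n ≠ g n) : lexLE f' g' ↔ lexLE f g := by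
  classical
  obtain ⟨hnr, hfg⟩ := Nat.find_spec hne
  have heq : ∀ m < Nat.find hne, f m = g m := fun m hm =>
    not_not.1 fun h => Nat.find_min hne hm ⟨hm.le.trans hnr, h⟩
  rw [lexLE_iff_lt_of_eq_of_ne heq hfg, lexLE_iff_lt_of_eq_of_ne, hf _ hnr, hg _ hnr]
  · intro m hm
    rw [hf m (hm.le.trans hnr), hg m (hm.le.trans hnr), heq m hm]
  · rwa [hf _ hnr, hg _ hnr]

instance isLinearOrder_lexLE : IsLinearOrder (ℕ → ℕ) lexLE := by
  have : lexLE = Function.onFun (fun a b : Lex (ℕ → ℕ) => a ≤ b) toLex := by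
    ext
    exact lexLE_iff_toLex_le
  rw [this]
  exact toLex.injective.isLinearOrder_onFun _

end LexLE

namespace SimpleGraph

variable {V : Type*} {G : SimpleGraph V}

lemma Connected.finite_setOf_dist_le [G.LocallyFinite] (hconn : G.Connected) (x : V) (r : ℕ) :
    {w | G.dist w x ≤ r}.Finite := by
  induction r with
  | zero => simp [hconn.dist_eq_zero_iff]
  | succ r ih =>
    refine (ih.biUnion fun y _ => (G.neighborSet y).toFinite.insert y).subset fun w hw => ?_
    obtain ⟨p, hp⟩ := hconn.exists_walk_length_eq_dist w x
    cases p with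
    | nil => exact Set.mem_biUnion (by simp) (Set.mem_insert _ _)
    | @cons _ y _ hadj q =>
      have hy : G.dist y x ≤ r := by
        have := G.dist_le q
        simp only [Walk.length_cons] at hp
        change G.dist w x ≤ r + 1 at hw
        omega
      exact Set.mem_biUnion hy (Set.mem_insert_of_mem _ hadj.symm)

lemma Connected.finite_setOf_dist_eq [G.LocallyFinite] (hconn : G.Connected) (x : V) (n : ℕ) :
    {w | G.dist w x = n}.Finite :=
  (hconn.finite_setOf_dist_le x n).subset fun _ hw => hw.le

def SphereCondition (G : SimpleGraph V) : Prop :=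
  ∀ u v : V, u ≠ v → ∀ r : ℕ, 1 ≤ r → ∃ w : V, G.dist w v = r ∧ r < G.dist w u

end SimpleGraph

lemma sphereSum_congr {V : Type*} {G : SimpleGraph V} {D : ℕ} {η η' : V → Fin D} {x : V}
    {n : ℕ} (h : ∀ w, G.dist w x = n → η w = η' w) :
    sphereSum G η x n = sphereSum G η' x n :=
  finsum_mem_congr rfl fun w hw => by rw [h w hw]

lemma orderDetermined_of_sphereSum_ne {V : Type*} {G : SimpleGraph V} {D : ℕ} {η : V → Fin D}
    {u v : V} {r n : ℕ} (hn : n ≤ r) (hne : sphereSum G η u n ≠ sphereSum G η v n) :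
    orderDetermined G u v r η := fun _ hagree =>
  lexLE_congr_of_ne
    (fun _ hm => sphereSum_congr fun w hw => hagree w (.inl (hw.trans_le hm)))
    (fun _ hm => sphereSum_congr fun w hw => hagree w (.inr (hw.trans_le hm)))
    ⟨n, hn, hne⟩

lemma measure_inter_setOf_eq_le_mul {Ω α : Type*} [mΩ : MeasurableSpace Ω] {P : Measure Ω}
    [MeasurableSpace α] [MeasurableSingletonClass α] [Countable α]
    {m : MeasurableSpace Ω} (hm : m ≤ mΩ) {X W : Ω → α}
    (hXm : Indep (MeasurableSpace.comap X inferInstance) m P) (hW : Measurable[m] W)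
    {A : Set Ω} (hA : MeasurableSet[m] A) {c : ℝ≥0∞} (hX : ∀ a, P (X ⁻¹' {a}) ≤ c) :
    P (A ∩ {ω | X ω = W ω}) ≤ c * P A := by
  have hAW : ∀ a, MeasurableSet[m] (A ∩ W ⁻¹' {a}) := fun a =>
    hA.inter (hW (measurableSet_singleton a))
  calc P (A ∩ {ω | X ω = W ω})
      ≤ P (⋃ a, X ⁻¹' {a} ∩ (A ∩ W ⁻¹' {a})) :=
        measure_mono fun ω ⟨hωA, hω⟩ => Set.mem_iUnion.2 ⟨W ω, hω, hωA, rfl⟩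
    _ ≤ ∑' a, P (X ⁻¹' {a}) * P (A ∩ W ⁻¹' {a}) := by
        refine (measure_iUnion_le _).trans_eq (tsum_congr fun a => ?_)
        exact (Indep_iff _ _ _).1 hXm _ _ ⟨{a}, measurableSet_singleton a, rfl⟩ (hAW a)
    _ ≤ ∑' a, c * P (A ∩ W ⁻¹' {a}) := by gcongr with a; exact hX a
    _ = c * P A := by
        have hdisj : Pairwise fun a b => Disjoint (A ∩ W ⁻¹' {a}) (A ∩ W ⁻¹' {b}) := fun a b hab =>
          (pairwise_disjoint_fiber W hab).mono Set.inter_subset_right Set.inter_subset_right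
        rw [ENNReal.tsum_mul_left, ← measure_iUnion hdisj fun a => hm _ (hAW a),
          ← Set.inter_iUnion, ← Set.preimage_iUnion, Set.iUnion_of_singleton, Set.preimage_univ,
          Set.inter_univ]

lemma ProbabilityTheory.iIndepFun.indep_comap_iSup_compl_singleton {Ω ι : Type*}
    [mΩ : MeasurableSpace Ω] {P : Measure Ω} {β : ι → Type*} [∀ i, MeasurableSpace (β i)]
    {f : ∀ i, Ω → β i} (hmeas : ∀ i, Measurable (f i)) (hindep : iIndepFun f P) (i : ι) :
    Indep (MeasurableSpace.comap (f i) inferInstance)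
      (⨆ j ∈ ({i}ᶜ : Set ι), MeasurableSpace.comap (f j) inferInstance) P := by
  simpa using indep_iSup_of_disjoint (fun j => (hmeas j).comap_le)
    ((iIndepFun_iff_iIndep _ _ _).1 hindep) (disjoint_compl_right (a := {i}))

abbrev sigmaOn {V Ω : Type*} {D : ℕ} (η : V → Ω → Fin D) (t : Set V) : MeasurableSpace Ω :=
  ⨆ w ∈ t, MeasurableSpace.comap (η w) inferInstance

lemma measurable_finsum_mem_of_subset {V Ω : Type*} {D : ℕ} {η : V → Ω → Fin D} {s t : Set V}
    (hs : s.Finite) (hst : s ⊆ t) :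
    Measurable[sigmaOn η t] fun ω => ∑ᶠ w ∈ s, ((η w ω : ℕ) + 1) := by
  simp_rw [finsum_mem_eq_finite_toFinset_sum _ hs]
  refine Finset.measurable_sum _ fun w hw =>
    (Measurable.of_discrete (f := fun x : Fin D => (x : ℕ) + 1)).comp ?_
  exact (comap_measurable (η w)).mono
    (le_iSup₂ (f := fun w _ => MeasurableSpace.comap (η w) inferInstance) w
      (hst (hs.mem_toFinset.1 hw))) le_rfl

lemma measure_val_preimage_singleton_le {Ω : Type*} [MeasurableSpace Ω] {P : Measure Ω} {D : ℕ}
    {X : Ω → Fin D} {c : ℝ≥0∞} (hX : ∀ s, P {ω | X ω = s} ≤ c) (a : ℕ) :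
    P ((fun ω => (X ω : ℕ)) ⁻¹' {a}) ≤ c := by
  by_cases ha : a < D
  · convert hX ⟨a, ha⟩ using 2
    ext ω
    simp [Fin.ext_iff]
  · convert (zero_le : 0 ≤ c)
    refine measure_eq_zero_iff_ae_notMem.2 (ae_of_all _ fun ω (hω : (X ω : ℕ) = a) => ?_)
    exact ha (hω ▸ (X ω).isLt)

section SphereSumAgreement

variable {V Ω : Type*} {G : SimpleGraph V} {D : ℕ} [mΩ : MeasurableSpace Ω] {P : Measure Ω}
  {η : V → Ω → Fin D}

lemma measure_sphereSum_eq_succ_le [G.LocallyFinite] (hconn : G.Connected)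
    (hmeas : ∀ v, Measurable (η v)) (hindep : iIndepFun η P)
    (hunif : ∀ v s, P {ω | η v ω = s} ≤ (D : ℝ≥0∞)⁻¹) {u v w₀ : V} {r : ℕ}
    (hw₀v : G.dist w₀ v = r + 1) (hw₀u : r + 1 < G.dist w₀ u) :
    P {ω | ∀ n ≤ r + 1, sphereSum G (fun w => η w ω) u n = sphereSum G (fun w => η w ω) v n}
      ≤ (D : ℝ≥0∞)⁻¹ *
        P {ω | ∀ n ≤ r, sphereSum G (fun w => η w ω) u n = sphereSum G (fun w => η w ω) v n} := by
  have hm : sigmaOn η {w₀}ᶜ ≤ mΩ := iSup₂_le fun w _ => (hmeas w).comap_le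
  set X : Ω → ℕ := fun ω => η w₀ ω
  have hXm : Indep (MeasurableSpace.comap X inferInstance) (sigmaOn η {w₀}ᶜ) P :=
    indep_of_indep_of_le_left (hindep.indep_comap_iSup_compl_singleton hmeas w₀)
      (Measurable.of_discrete.comp (comap_measurable (η w₀))).comap_le
  have hZ : ∀ x n, G.dist w₀ x ≠ n →
      Measurable[sigmaOn η {w₀}ᶜ] fun ω => sphereSum G (fun w => η w ω) x n :=
    fun x n h => measurable_finsum_mem_of_subset (hconn.finite_setOf_dist_eq x n)
      fun w hw (hw₀ : w = w₀) => h (hw₀ ▸ hw)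
  set S : Ω → ℕ := fun ω => ∑ᶠ w ∈ {w | G.dist w v = r + 1} \ {w₀}, ((η w ω : ℕ) + 1)
  have hS : Measurable[sigmaOn η {w₀}ᶜ] S := measurable_finsum_mem_of_subset
    (hconn.finite_setOf_dist_eq v _).sdiff (Set.sdiff_subset_compl _ _)
  have hsplit : ∀ ω, sphereSum G (fun w => η w ω) v (r + 1) = X ω + 1 + S ω := fun ω => by
    rw [sphereSum, ← finsum_mem_add_sdiff (t := {w | G.dist w v = r + 1})
      (Set.singleton_subset_iff.2 hw₀v) (hconn.finite_setOf_dist_eq v _), finsum_mem_singleton]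
  have hE : MeasurableSet[sigmaOn η {w₀}ᶜ]
      {ω | ∀ n ≤ r, sphereSum G (fun w => η w ω) u n = sphereSum G (fun w => η w ω) v n} := by
    simp only [Set.ofPred_forall]
    exact MeasurableSet.iInter fun n => MeasurableSet.iInter fun hn =>
      measurableSet_eq_fun (hZ u n (by omega)) (hZ v n (by omega))
  refine (measure_mono ?_).trans
    (measure_inter_setOf_eq_le_mul hm hXm (((hZ u (r + 1) hw₀u.ne').sub hS).sub_const 1) hE
      (measure_val_preimage_singleton_le (hunif w₀)))
  intro ω hω
  refine ⟨fun n hn => hω n (by omega), ?_⟩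
  have := hω (r + 1) le_rfl
  rw [hsplit] at this
  show X ω = sphereSum G (fun w => η w ω) u (r + 1) - S ω - 1
  omega

lemma measure_sphereSum_eq_le [IsProbabilityMeasure P] [G.LocallyFinite] (hconn : G.Connected)
    (hsphere : G.SphereCondition) (hmeas : ∀ v, Measurable (η v)) (hindep : iIndepFun η P)
    (hunif : ∀ v s, P {ω | η v ω = s} ≤ (D : ℝ≥0∞)⁻¹) {u v : V} (huv : u ≠ v) (r : ℕ) :
    P {ω | ∀ n ≤ r, sphereSum G (fun w => η w ω) u n = sphereSum G (fun w => η w ω) v n}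
      ≤ (D : ℝ≥0∞)⁻¹ ^ r := by
  induction r with
  | zero => simpa using prob_le_one
  | succ r ih =>
    obtain ⟨w₀, hw₀v, hw₀u⟩ := hsphere u v huv (r + 1) r.succ_pos
    rw [pow_succ']
    exact (measure_sphereSum_eq_succ_le hconn hmeas hindep hunif hw₀v hw₀u).trans (by gcongr)

lemma measure_sphereSum_eq_eq_zero [IsProbabilityMeasure P] [G.LocallyFinite] (hconn : G.Connected)
    (hsphere : G.SphereCondition) (hD : 1 < D) (hmeas : ∀ v, Measurable (η v))
    (hindep : iIndepFun η P)
    (hunif : ∀ v s, P {ω | η v ω = s} ≤ (D : ℝ≥0∞)⁻¹) {u v : V} (huv : u ≠ v) :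
    P {ω | sphereSum G (fun w => η w ω) u = sphereSum G (fun w => η w ω) v} = 0 := by
  have hD' : (D : ℝ≥0∞)⁻¹ < 1 := ENNReal.inv_lt_one.2 (by exact_mod_cast hD)
  refine le_antisymm (ge_of_tendsto' (ENNReal.tendsto_pow_atTop_nhds_zero_of_lt_one hD') fun r =>
    (measure_mono ?_).trans (measure_sphereSum_eq_le hconn hsphere hmeas hindep hunif huv r)) bot_le
  intro ω hω n _
  exact congrFun hω n

end SphereSumAgreement

theorem stmt7_general {V : Type*} [Countable V] (G : SimpleGraph V)
    (hconn : G.Connected) [G.LocallyFinite]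
    (hsphere : ∀ u v : V, u ≠ v → ∀ r : ℕ, 1 ≤ r →
      ∃ w : V, G.dist w v = r ∧ r < G.dist w u)
    (D : ℕ) (hD : 2 ≤ D)
    {Ω : Type*} [MeasurableSpace Ω] (P : Measure Ω) [IsProbabilityMeasure P]
    (η : V → Ω → Fin D)
    (hmeas : ∀ v : V, Measurable (η v))
    (hindep : iIndepFun η P)
    (hunif : ∀ (v : V) (s : Fin D), P {ω | η v ω = s} = (D : ℝ≥0∞)⁻¹) :
    (P {ω | (∀ u v : V, u ≠ v →
          (fun n => sphereSum G (fun w => η w ω) u n) ≠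
            (fun n => sphereSum G (fun w => η w ω) v n)) ∧
        IsLinearOrder V (fun u v : V =>
          lexLE (sphereSum G (fun w => η w ω) u) (sphereSum G (fun w => η w ω) v))} = 1) ∧
      ∀ u v : V, u ≠ v → ∀ r : ℕ,
        P {ω | ¬ orderDetermined G u v r (fun w => η w ω)} ≤ (D : ℝ≥0∞)⁻¹ ^ r := by
  have hunif' : ∀ v s, P {ω | η v ω = s} ≤ (D : ℝ≥0∞)⁻¹ := fun v s => (hunif v s).le
  have hdistinct : ∀ᵐ ω ∂P, ∀ u v : V, u ≠ v →
      sphereSum G (fun w => η w ω) u ≠ sphereSum G (fun w => η w ω) v := by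
    refine ae_all_iff.2 fun u => ae_all_iff.2 fun v => ?_
    by_cases huv : u = v
    · exact ae_of_all _ fun _ h => (h huv).elim
    · filter_upwards [measure_eq_zero_iff_ae_notMem.1 (measure_sphereSum_eq_eq_zero hconn hsphere
        hD hmeas hindep hunif' huv)] with ω hω _ using hω
  refine ⟨(measure_congr (ae_eq_univ.2 ?_)).trans measure_univ, fun u v huv r => ?_⟩
  · filter_upwards [hdistinct] with ω hω
    exact ⟨hω, Function.Injective.isLinearOrder_onFun lexLE fun u v h =>
      not_not.1 fun huv => hω u v huv h⟩
  · refine (measure_mono ?_).trans (measure_sphereSum_eq_le hconn hsphere hmeas hindep hunif' huv r)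
    intro ω hω n hn
    by_contra hne
    exact hω (orderDetermined_of_sphereSum_ne hn hne)

/-- Let `G` be an infinite, connected, locally finite simple graph on a
countable vertex set `V` satisfying the sphere condition, let `D ≥ 2` and let
`η = (η_v)_{v ∈ V}` be i.i.d., each uniform on `{1, …, D}`. Then: (i) almost surely, the
sequences `Z_u(η)` and `Z_v(η)` are distinct for all distinct `u, v ∈ V`, so the relation
`u ⪯_η v ↔ Z_u(η) ≤_lex Z_v(η)` is almost surely a (total) linear order on `V`; and
(ii) for all distinct `u, v` and every `r ≥ 0`, `P(R_{u,v}(η) > r) ≤ D^{-r}`. -/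
theorem stmt7 {V : Type*} [Countable V] [Infinite V] (G : SimpleGraph V)
    (hconn : G.Connected) [G.LocallyFinite]
    (hsphere : ∀ u v : V, u ≠ v → ∀ r : ℕ, 1 ≤ r →
      ∃ w : V, G.dist w v = r ∧ r < G.dist w u)
    (D : ℕ) (hD : 2 ≤ D)
    {Ω : Type*} [MeasurableSpace Ω] (P : Measure Ω) [IsProbabilityMeasure P]
    (η : V → Ω → Fin D)
    (hmeas : ∀ v : V, Measurable (η v))
    (hindep : iIndepFun η P)
    (hunif : ∀ (v : V) (s : Fin D), P {ω | η v ω = s} = (D : ℝ≥0∞)⁻¹) :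
    (P {ω | (∀ u v : V, u ≠ v →
          (fun n => sphereSum G (fun w => η w ω) u n) ≠
            (fun n => sphereSum G (fun w => η w ω) v n)) ∧
        IsLinearOrder V (fun u v : V =>
          lexLE (sphereSum G (fun w => η w ω) u) (sphereSum G (fun w => η w ω) v))} = 1) ∧
      ∀ u v : V, u ≠ v → ∀ r : ℕ,
        P {ω | ¬ orderDetermined G u v r (fun w => η w ω)} ≤ (D : ℝ≥0∞)⁻¹ ^ r :=
  stmt7_general G hconn hsphere D hD P η hmeas hindep hunif
end

section
/- Let G = (V, E) be a connected, locally finite simple graph on a countably infinite vertex set with maximum degree Δ < ∞, and let (T, 𝒯, π) be a probability space. Define ψ : (T^Δ)^V × [0,1]^V → T^E as follows: for an edge e = {u,v}, if z_u < z_v then ψ(y, z)_e := y_u^j with j = |{w adjacent to u : z_u ≤ z_w ≤ z_v}|, and if z_u ≥ z_v then ψ(y, z)_e := y_v^j with j = |{w adjacent to v : z_v ≤ z_w ≤ z_u}|. Then: (i) ψ is measurable and the pushforward under ψ of the product measure ⨂_{v∈V}(π^{⊗Δ} ⊗ λ), where λ is Lebesgue measure on [0,1], equals the product measure ⨂_{e∈E}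 π on T^E — i.e., the family (ψ(Y,Z)_e)_{e∈E} is i.i.d. with law π when Y = (Y_v^1,…,Y_v^Δ)_{v∈V} are i.i.d. with law π and Z = (Z_v)_{v∈V} are i.i.d. uniform on [0,1], all independent; (ii) for every graph automorphism γ of G (acting on coordinates), ψ(γ·y, γ·z)_{γ·e} = ψ(y,z)_e for all y, z, e; and (iii) ψ(y,z)_{{u,v}} depends only on the coordinates (y_w, z_w) with dist(w, u) ≤ 1 or dist(w, v) ≤ 1. -/
/-!
Fix `z` with pairwise distinct values. An edge `e = {a, b}` with `z a < z b` reads the coordinate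
`y_a^j`, where `j` is the rank of `b` among the neighbours `w` of `a` with `z a ≤ z w`. The rank
is strictly increasing in `z b`, so two edges with the same lower endpoint read different
coordinates: `y ↦ ψ(y, z)` is a coordinate projection along an injective map `E → V × Fin Δ`,
and hence pushes `⨂_V π^{⊗Δ}` forward to `⨂_E π`. Since `Z` is almost surely injective, Fubini
gives the same law for `ψ(Y, Z)`. Equivariance and locality are read off the definition.
-/

open MeasureTheory ProbabilityTheory

/-- The value assigned by the map `ψ` to the ordered pair `(u, v)`: if `z u < z v` then
`y_u^j` with `j = |{w ~ u : z u ≤ z w ≤ z v}|`, symmetrically if `z v < z u`, and a junk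
value on the (Lebesgue-null, and irrelevant for edges once `z` is injective) tie
`z u = z v`.  Since for adjacent `u, v` one always has `1 ≤ j ≤ Δ`, the reduction
`Fin.ofNat'` (i.e. `(j - 1) % Δ`) agrees with `j - 1` in every relevant case. -/
noncomputable def psiPair {V T : Type*} [Nonempty T] (G : SimpleGraph V) (Δ : ℕ)
    [NeZero Δ] (y : V → Fin Δ → T) (z : V → ℝ) (u v : V) : T :=
  if z u < z v then
    y u (Fin.ofNat Δ (Nat.card {w : V | G.Adj u w ∧ z u ≤ z w ∧ z w ≤ z v} - 1))
  else if z v < z u then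
    y v (Fin.ofNat Δ (Nat.card {w : V | G.Adj v w ∧ z v ≤ z w ∧ z w ≤ z u} - 1))
  else Classical.arbitrary T

theorem psiPair_symm {V T : Type*} [Nonempty T] (G : SimpleGraph V) (Δ : ℕ)
    [NeZero Δ] (y : V → Fin Δ → T) (z : V → ℝ) (u v : V) :
    psiPair G Δ y z u v = psiPair G Δ y z v u := by
  unfold psiPair
  rcases lt_trichotomy (z u) (z v) with h | h | h
  · rw [if_pos h, if_neg (asymm h), if_pos h]
  · simp [h]
  · rw [if_neg (asymm h), if_pos h, if_pos h]

/-- The map `ψ : (T^Δ)^V × [0,1]^V → T^E`, defined on each edge `e = {u,v}` via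
`psiPair` (which is symmetric in `(u,v)`). -/
noncomputable def psiMap {V T : Type*} [Nonempty T] (G : SimpleGraph V) (Δ : ℕ)
    [NeZero Δ] (y : V → Fin Δ → T) (z : V → ℝ) (e : G.edgeSet) : T :=
  Sym2.lift ⟨fun u v => psiPair G Δ y z u v, fun u v => psiPair_symm G Δ y z u v⟩ e.val

namespace MeasureTheory

theorem measurePreserving_arrowProdEquivProdArrow_infinitePi {ι α β : Type*}
    [MeasurableSpace α] [MeasurableSpace β] (μ : ι → Measure α) (ν : ι → Measure β)
    [∀ i, IsProbabilityMeasure (μ i)] [∀ i, IsProbabilityMeasure (ν i)] :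
    MeasurePreserving (MeasurableEquiv.arrowProdEquivProdArrow α β ι)
      (Measure.infinitePi fun i => (μ i).prod (ν i))
      ((Measure.infinitePi μ).prod (Measure.infinitePi ν)) := by
  refine ⟨MeasurableEquiv.measurable _, ?_⟩
  rw [MeasurableEquiv.map_apply_eq_iff_map_symm_apply_eq]
  refine (Measure.isProjectiveLimit_infinitePi fun i => (μ i).prod (ν i)).unique fun I => ?_
  have hσ : I.restrict ∘ (MeasurableEquiv.arrowProdEquivProdArrow α β ι).symm =
      (MeasurableEquiv.arrowProdEquivProdArrow α β I).symm ∘ Prod.map I.restrict I.restrict :=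
    rfl
  rw [Measure.map_map (by fun_prop) (by fun_prop), hσ,
    ← Measure.map_map (by fun_prop) (by fun_prop),
    ← Measure.map_prod_map _ _ (by fun_prop) (by fun_prop), Measure.infinitePi_map_restrict,
    Measure.infinitePi_map_restrict]
  exact (measurePreserving_arrowProdEquivProdArrow α β I _ _).symm.map_eq

namespace Measure

theorem infinitePi_map_comp_of_injective {ι κ X : Type*} [MeasurableSpace X]
    (μ : ι → Measure X) [∀ i, IsProbabilityMeasure (μ i)] {f : κ → ι}
    (hf : Function.Injective f) :
    (infinitePi μ).map (fun x k => x (f k)) = infinitePi fun k => μ (f k) := by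
  classical
  refine eq_infinitePi _ fun s t ht => ?_
  set t' : ι → Set X := Function.extend f t fun _ => Set.univ
  have ht' : ∀ k, t' (f k) = t k := fun k => hf.extend_apply _ _ k
  have hpre : (fun x k => x (f k)) ⁻¹' (s : Set κ).pi t =
      ((s.image f : Finset ι) : Set ι).pi t' := by
    ext x
    simp [ht']
  rw [map_apply (by fun_prop) (.pi s.countable_toSet fun k _ => ht k), hpre,
    infinitePi_pi _ (by simpa [ht'] using fun k _ => ht k), Finset.prod_image hf.injOn]
  simp [ht']

theorem infinitePi_pi_map_of_injective {ι J κ X : Type*} [Fintype J] [MeasurableSpace X]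
    (μ : Measure X) [IsProbabilityMeasure μ] {f : κ → ι × J} (hf : Function.Injective f) :
    (infinitePi fun _ : ι => Measure.pi fun _ : J => μ).map (fun y k => y (f k).1 (f k).2) =
      infinitePi fun _ : κ => μ := by
  simp_rw [← infinitePi_eq_pi]
  rw [← infinitePi_map_curry (fun _ _ => μ), map_map (by fun_prop) (by fun_prop)]
  exact infinitePi_map_comp_of_injective (fun _ => μ) hf

theorem prod_diagonal_eq_zero {α : Type*} [MeasurableSpace α] [MeasurableEq α]
    (μ ν : Measure α) [SFinite ν] [NullSingletonClass ν] :
    μ.prod ν (Set.diagonal α) = 0 := by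
  rw [prod_apply measurableSet_diagonal]
  simp [Set.preimage, Set.diagonal]

theorem ae_injective_infinitePi {ι α : Type*} [Countable ι] [MeasurableSpace α]
    [MeasurableEq α] (μ : Measure α) [IsProbabilityMeasure μ] [NullSingletonClass μ] :
    ∀ᵐ x ∂infinitePi fun _ : ι => μ, Function.Injective x := by
  have hpair : ∀ v w : ι, ∀ᵐ x ∂infinitePi fun _ : ι => μ, x v = x w → v = w := by
    intro v w
    rcases eq_or_ne v w with rfl | hvw
    · exact ae_of_all _ fun _ _ => rfl
    have hlaw : (infinitePi fun _ : ι => μ).map (fun x => (x v, x w)) = μ.prod μ := by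
      have := ((iIndepFun_infinitePi (P := fun _ : ι => μ) (X := fun _ => id)
        fun _ => measurable_id).indepFun hvw).map_prod_eq_prod_map_map
        (measurable_pi_apply v).aemeasurable (measurable_pi_apply w).aemeasurable
      simpa only [id, infinitePi_map_eval] using this
    have hnull := prod_diagonal_eq_zero μ μ
    rw [← hlaw, map_apply (by fun_prop) measurableSet_diagonal] at hnull
    exact measure_mono_null (fun x (hx : ¬(x v = x w → v = w)) => (Classical.not_imp.1 hx).1)
      hnull
  filter_upwards [ae_all_iff.2 fun v => ae_all_iff.2 (hpair v)] with x hx v w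
  exact hx v w

theorem map_prod_eq_of_ae_map_eq {α β γ : Type*} [MeasurableSpace α] [MeasurableSpace β]
    [MeasurableSpace γ] {μ : Measure α} {ν : Measure β} [SFinite μ] [IsProbabilityMeasure ν]
    {F : α × β → γ} (hF : Measurable F) {ρ : Measure γ}
    (h : ∀ᵐ b ∂ν, μ.map (fun a => F (a, b)) = ρ) :
    (μ.prod ν).map F = ρ := by
  ext s hs
  rw [map_apply hF hs, prod_apply_symm (hF hs)]
  have hsec : ∀ᵐ b ∂ν, μ ((fun a => (a, b)) ⁻¹' (F ⁻¹' s)) = ρ s := h.mono fun b hb => by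
    rw [← hb, map_apply (by fun_prop) hs]
    rfl
  rw [lintegral_congr_ae hsec, lintegral_const, measure_univ, mul_one]

end Measure

end MeasureTheory

theorem Fin.ofNat_sub_one_inj {n a b : ℕ} [NeZero n] (ha : 1 ≤ a) (ha' : a ≤ n) (hb : 1 ≤ b)
    (hb' : b ≤ n) : Fin.ofNat n (a - 1) = Fin.ofNat n (b - 1) ↔ a = b := by
  rw [Fin.ext_iff, Fin.val_ofNat, Fin.val_ofNat, Nat.mod_eq_of_lt (by omega),
    Nat.mod_eq_of_lt (by omega)]
  omega

namespace SimpleGraph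

variable {V : Type*} {G : SimpleGraph V}

variable (G) in
noncomputable def neighborRank (z : V → ℝ) (a b : V) : ℕ :=
  Nat.card {w : V | G.Adj a w ∧ z a ≤ z w ∧ z w ≤ z b}

theorem neighborRank_comp_symm (γ : G ≃g G) (z : V → ℝ) (a b : V) :
    G.neighborRank (fun v => z (γ.symm v)) (γ a) (γ b) = G.neighborRank z a b :=
  (Nat.card_congr (Equiv.subtypeEquiv γ.toEquiv fun w => by simp [γ.map_adj_iff])).symm

theorem neighborRank_congr {z z' : V → ℝ} {a b : V}
    (hz : ∀ w, w = a ∨ w = b ∨ G.Adj a w → z' w = z w) :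
    G.neighborRank z' a b = G.neighborRank z a b := by
  unfold neighborRank
  congr 2
  ext w
  by_cases ha : G.Adj a w
  · simp [ha, hz a (.inl rfl), hz b (.inr (.inl rfl)), hz w (.inr (.inr ha))]
  · simp [ha]

theorem exists_eq_mk_lt_of_injective {α : Type*} [LinearOrder α] {z : V → α}
    (hz : Function.Injective z) (e : G.edgeSet) :
    ∃ a b, (e : Sym2 V) = s(a, b) ∧ G.Adj a b ∧ z a < z b := by
  obtain ⟨e, he⟩ := e
  induction e using Sym2.ind with
  | _ u v =>
    rcases lt_or_gt_of_ne (hz.ne (G.mem_edgeSet.1 he).ne) with h | h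
    · exact ⟨u, v, rfl, he, h⟩
    · exact ⟨v, u, Sym2.eq_swap, (G.mem_edgeSet.1 he).symm, h⟩

variable [G.LocallyFinite]

theorem neighborRank_eq_card_filter (z : V → ℝ) (a b : V) :
    G.neighborRank z a b = {w ∈ G.neighborFinset a | z a ≤ z w ∧ z w ≤ z b}.card := by
  rw [neighborRank, ← Set.ncard_coe_finset, ← Nat.card_coe_set_eq]
  congr
  ext w
  simp

theorem one_le_neighborRank {z : V → ℝ} {a b : V} (hab : G.Adj a b) (hz : z a ≤ z b) :
    1 ≤ G.neighborRank z a b := by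
  rw [neighborRank_eq_card_filter, Nat.one_le_iff_ne_zero, Finset.card_ne_zero]
  exact ⟨b, by simp [hab, hz]⟩

theorem neighborRank_le_degree (z : V → ℝ) (a b : V) : G.neighborRank z a b ≤ G.degree a := by
  rw [neighborRank_eq_card_filter]
  exact Finset.card_filter_le _ _

theorem neighborRank_lt_neighborRank {z : V → ℝ} {a b b' : V} (hab' : G.Adj a b')
    (hb : z a ≤ z b) (hbb' : z b < z b') : G.neighborRank z a b < G.neighborRank z a b' := by
  rw [neighborRank_eq_card_filter, neighborRank_eq_card_filter]
  refine Finset.card_lt_card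
    ⟨Finset.monotone_filter_right _ fun w _ hw => ⟨hw.1, hw.2.trans hbb'.le⟩, fun hsub => ?_⟩
  have hb' := hsub <|
    Finset.mem_filter.2 ⟨(G.mem_neighborFinset a b').2 hab', hb.trans hbb'.le, le_rfl⟩
  exact (Finset.mem_filter.1 hb').2.2.not_gt hbb'

theorem eq_of_neighborRank_eq {z : V → ℝ} {a b b' : V} (hab : G.Adj a b) (hab' : G.Adj a b')
    (hb : z a ≤ z b) (hb' : z a ≤ z b') (h : G.neighborRank z a b = G.neighborRank z a b') :
    z b = z b' := by
  rcases lt_trichotomy (z b) (z b') with hlt | heq | hgt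
  · exact absurd h (neighborRank_lt_neighborRank hab' hb hlt).ne
  · exact heq
  · exact absurd h (neighborRank_lt_neighborRank hab hb' hgt).ne'

theorem measurable_neighborRank (a b : V) :
    Measurable fun z : V → ℝ => G.neighborRank z a b := by
  simp_rw [neighborRank_eq_card_filter, Finset.card_filter]
  refine Finset.measurable_sum _ fun w _ => Measurable.ite ?_ measurable_const measurable_const
  exact (measurableSet_le (measurable_pi_apply a) (measurable_pi_apply w)).inter
    (measurableSet_le (measurable_pi_apply w) (measurable_pi_apply b))

end SimpleGraph

section psi

variable {V T : Type*} [Nonempty T] {G : SimpleGraph V} {Δ : ℕ} [NeZero Δ]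

theorem psiPair_eq_ite (y : V → Fin Δ → T) (z : V → ℝ) (u v : V) :
    psiPair G Δ y z u v =
      if z u < z v then y u (Fin.ofNat Δ (G.neighborRank z u v - 1))
      else if z v < z u then y v (Fin.ofNat Δ (G.neighborRank z v u - 1))
      else Classical.arbitrary T :=
  rfl

theorem psiPair_of_lt (y : V → Fin Δ → T) {z : V → ℝ} {u v : V} (h : z u < z v) :
    psiPair G Δ y z u v = y u (Fin.ofNat Δ (G.neighborRank z u v - 1)) :=
  if_pos h

theorem psiMap_of_eq_mk (y : V → Fin Δ → T) (z : V → ℝ) {e : G.edgeSet} {u v : V}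
    (he : (e : Sym2 V) = s(u, v)) : psiMap G Δ y z e = psiPair G Δ y z u v := by
  rw [psiMap, he, Sym2.lift_mk]

theorem measurable_psiPair [MeasurableSpace T] [G.LocallyFinite] (u v : V) :
    Measurable fun p : (V → Fin Δ → T) × (V → ℝ) => psiPair G Δ p.1 p.2 u v := by
  have hbranch (a b : V) : Measurable fun p : (V → Fin Δ → T) × (V → ℝ) =>
      p.1 a (Fin.ofNat Δ (G.neighborRank p.2 a b - 1)) := by
    have hidx : Measurable fun p : (V → Fin Δ → T) × (V → ℝ) =>
        Fin.ofNat Δ (G.neighborRank p.2 a b - 1) :=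
      (measurable_from_top (f := fun n : ℕ => Fin.ofNat Δ (n - 1))).comp
        ((SimpleGraph.measurable_neighborRank a b).comp measurable_snd)
    have happly : Measurable fun q : ((V → Fin Δ → T) × (V → ℝ)) × Fin Δ => q.1.1 a q.2 :=
      measurable_from_prod_countable_left fun k => (measurable_fst.eval (a := a)).eval (a := k)
    exact happly.comp (measurable_id.prodMk hidx)
  refine Measurable.ite ?_ (hbranch u v) (Measurable.ite ?_ (hbranch v u) measurable_const)
  · exact measurableSet_lt (measurable_snd.eval (a := u)) (measurable_snd.eval (a := v))
  · exact measurableSet_lt (measurable_snd.eval (a := v)) (measurable_snd.eval (a := u))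

theorem measurable_psiMap [MeasurableSpace T] [G.LocallyFinite] :
    Measurable fun p : (V → Fin Δ → T) × (V → ℝ) => fun e : G.edgeSet => psiMap G Δ p.1 p.2 e := by
  refine measurable_pi_lambda _ fun ⟨e, he⟩ => ?_
  induction e using Sym2.ind with
  | _ u v =>
    have h (p : (V → Fin Δ → T) × (V → ℝ)) :
        psiMap G Δ p.1 p.2 ⟨s(u, v), he⟩ = psiPair G Δ p.1 p.2 u v :=
      psiMap_of_eq_mk _ _ rfl
    simpa only [h] using measurable_psiPair u v

theorem psiPair_comp_symm (γ : G ≃g G) (y : V → Fin Δ → T) (z : V → ℝ) (u v : V) :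
    psiPair G Δ (fun v => y (γ.symm v)) (fun v => z (γ.symm v)) (γ u) (γ v) =
      psiPair G Δ y z u v := by
  rw [psiPair_eq_ite, psiPair_eq_ite, SimpleGraph.neighborRank_comp_symm,
    SimpleGraph.neighborRank_comp_symm]
  simp only [γ.symm_apply_apply]

theorem psiMap_mapEdgeSet (γ : G ≃g G) (y : V → Fin Δ → T) (z : V → ℝ) (e : G.edgeSet) :
    psiMap G Δ (fun v => y (γ.symm v)) (fun v => z (γ.symm v)) (γ.mapEdgeSet e) =
      psiMap G Δ y z e := by
  obtain ⟨e, he⟩ := e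
  induction e using Sym2.ind with
  | _ u v =>
    have hγe : ((γ.mapEdgeSet ⟨s(u, v), he⟩ : G.edgeSet) : Sym2 V) = s(γ u, γ v) := rfl
    rw [psiMap_of_eq_mk _ _ hγe, psiMap_of_eq_mk _ _ rfl, psiPair_comp_symm]

theorem psiPair_congr {y y' : V → Fin Δ → T} {z z' : V → ℝ} {u v : V}
    (hyu : y' u = y u) (hyv : y' v = y v)
    (hz : ∀ w, w = u ∨ w = v ∨ G.Adj u w ∨ G.Adj v w → z' w = z w) :
    psiPair G Δ y' z' u v = psiPair G Δ y z u v := by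
  have hu : G.neighborRank z' u v = G.neighborRank z u v :=
    SimpleGraph.neighborRank_congr fun w hw => hz w (by tauto)
  have hv : G.neighborRank z' v u = G.neighborRank z v u :=
    SimpleGraph.neighborRank_congr fun w hw => hz w (by tauto)
  rw [psiPair_eq_ite, psiPair_eq_ite, hu, hv, hz u (.inl rfl), hz v (.inr (.inl rfl)), hyu, hyv]

theorem psiMap_congr {y y' : V → Fin Δ → T} {z z' : V → ℝ} {e : G.edgeSet} {u v : V}
    (he : (e : Sym2 V) = s(u, v))
    (h : ∀ w, (G.dist w u ≤ 1 ∨ G.dist w v ≤ 1) → y' w = y w ∧ z' w = z w) :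
    psiMap G Δ y' z' e = psiMap G Δ y z e := by
  have hball {w a : V} : w = a ∨ G.Adj a w → G.dist w a ≤ 1 := by
    rintro (rfl | hadj)
    · simp
    · exact (SimpleGraph.dist_eq_one_iff_adj.2 hadj.symm).le
  rw [psiMap_of_eq_mk _ _ he, psiMap_of_eq_mk _ _ he]
  refine psiPair_congr (h u (.inl (hball (.inl rfl)))).1 (h v (.inr (hball (.inl rfl)))).1
    fun w hw => (h w ?_).2
  rcases hw with rfl | rfl | hadj | hadj
  exacts [.inl (hball (.inl rfl)), .inr (hball (.inl rfl)), .inl (hball (.inr hadj)),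
    .inr (hball (.inr hadj))]

theorem exists_injective_psiMap_eq [G.LocallyFinite] (hdeg : ∀ v, G.degree v ≤ Δ)
    {z : V → ℝ} (hz : Function.Injective z) :
    ∃ f : G.edgeSet → V × Fin Δ, Function.Injective f ∧
      ∀ (y : V → Fin Δ → T) e, psiMap G Δ y z e = y (f e).1 (f e).2 := by
  choose a b hab hadj hlt using SimpleGraph.exists_eq_mk_lt_of_injective (G := G) hz
  have hrank e : 1 ≤ G.neighborRank z (a e) (b e) ∧ G.neighborRank z (a e) (b e) ≤ Δ :=
    ⟨SimpleGraph.one_le_neighborRank (hadj e) (hlt e).le,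
      (SimpleGraph.neighborRank_le_degree z _ _).trans (hdeg _)⟩
  refine ⟨fun e => (a e, Fin.ofNat Δ (G.neighborRank z (a e) (b e) - 1)), fun e₁ e₂ h => ?_,
    fun y e => by rw [psiMap_of_eq_mk _ _ (hab e), psiPair_of_lt _ (hlt e)]⟩
  obtain ⟨ha, hk⟩ := Prod.mk.inj h
  rw [Fin.ofNat_sub_one_inj (hrank e₁).1 (hrank e₁).2 (hrank e₂).1 (hrank e₂).2, ha] at hk
  have hb : b e₁ = b e₂ := hz <| SimpleGraph.eq_of_neighborRank_eq (ha ▸ hadj e₁) (hadj e₂)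
    (ha ▸ (hlt e₁).le) (hlt e₂).le hk
  exact Subtype.ext (by rw [hab, hab, ha, hb])

variable [Countable V] [MeasurableSpace T] [G.LocallyFinite]

theorem measurePreserving_psiMap (hdeg : ∀ v, G.degree v ≤ Δ) (π : Measure T)
    [IsProbabilityMeasure π] (ζ : Measure ℝ) [IsProbabilityMeasure ζ] [NullSingletonClass ζ] :
    MeasurePreserving (fun p e => psiMap G Δ p.1 p.2 e)
      ((Measure.infinitePi fun _ : V => Measure.pi fun _ : Fin Δ => π).prod
        (Measure.infinitePi fun _ : V => ζ))
      (Measure.infinitePi fun _ : G.edgeSet => π) := by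
  refine ⟨measurable_psiMap, Measure.map_prod_eq_of_ae_map_eq measurable_psiMap ?_⟩
  filter_upwards [Measure.ae_injective_infinitePi ζ] with z hz
  obtain ⟨f, hf, hψ⟩ := exists_injective_psiMap_eq (T := T) hdeg hz
  simp_rw [hψ]
  exact Measure.infinitePi_pi_map_of_injective π hf

theorem hasLaw_psiMap (hdeg : ∀ v, G.degree v ≤ Δ) (π : Measure T)
    [IsProbabilityMeasure π] (ζ : Measure ℝ) [IsProbabilityMeasure ζ] [NullSingletonClass ζ]
    {Ω : Type*} [MeasurableSpace Ω] {P : Measure Ω} {Y : Ω → V → Fin Δ → T} {Z : Ω → V → ℝ}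
    (hmeas : ∀ v, Measurable fun ω => (Y ω v, Z ω v))
    (hindep : iIndepFun (fun v ω => (Y ω v, Z ω v)) P)
    (hlaw : ∀ v, P.map (fun ω => (Y ω v, Z ω v)) = (Measure.pi fun _ : Fin Δ => π).prod ζ) :
    HasLaw (fun ω e => psiMap G Δ (Y ω) (Z ω) e) (Measure.infinitePi fun _ : G.edgeSet => π) P := by
  have hvertices : HasLaw (fun ω v => (Y ω v, Z ω v))
      (Measure.infinitePi fun _ : V => (Measure.pi fun _ : Fin Δ => π).prod ζ) P :=
    hindep.hasLaw_infinitePi (fun v => ⟨(hmeas v).aemeasurable, hlaw v⟩)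
      (measurable_pi_lambda _ hmeas).aemeasurable
  exact (measurePreserving_psiMap hdeg π ζ).comp_hasLaw
    ((measurePreserving_arrowProdEquivProdArrow_infinitePi _ _).comp_hasLaw hvertices)

end psi

theorem stmt9_general {V T : Type*} [Countable V] [Nonempty T]
    [MeasurableSpace T]
    (G : SimpleGraph V) [G.LocallyFinite]
    (Δ : ℕ) [NeZero Δ] (hdeg : ∀ v : V, G.degree v ≤ Δ)
    (π : Measure T) [IsProbabilityMeasure π]
    {Ω : Type*} [MeasurableSpace Ω] (P : Measure Ω) [IsProbabilityMeasure P]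
    (Y : Ω → V → Fin Δ → T) (Z : Ω → V → ℝ)
    (hYZmeas : ∀ v : V, Measurable (fun ω => (Y ω v, Z ω v)))
    (hiid : iIndepFun (fun (v : V) (ω : Ω) => (Y ω v, Z ω v)) P)
    (hlaw : ∀ v : V, Measure.map (fun ω => (Y ω v, Z ω v)) P =
      (Measure.pi fun _ : Fin Δ => π).prod (volume.restrict (Set.Icc (0 : ℝ) 1))) :
    -- (i) measurability and the i.i.d. property of `(ψ(Y,Z)_e)_{e ∈ E}` with law `π`
    (Measurable (fun p : (V → Fin Δ → T) × (V → ℝ) =>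
        fun e : G.edgeSet => psiMap G Δ p.1 p.2 e) ∧
      iIndepFun
        (fun (e : G.edgeSet) (ω : Ω) => psiMap G Δ (Y ω) (Z ω) e) P ∧
      ∀ e : G.edgeSet, Measure.map (fun ω => psiMap G Δ (Y ω) (Z ω) e) P = π) ∧
    -- (ii) automorphism equivariance
    (∀ (γ : G ≃g G) (y : V → Fin Δ → T) (z : V → ℝ) (e : G.edgeSet),
      psiMap G Δ (fun v => y (γ.symm v)) (fun v => z (γ.symm v)) (γ.mapEdgeSet e) =
        psiMap G Δ y z e) ∧
    -- (iii) locality: the value at an edge `{u,v}` depends only on coordinates within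
    -- distance 1 of `u` or `v`
    (∀ (y y' : V → Fin Δ → T) (z z' : V → ℝ) (e : G.edgeSet) (u v : V),
      (e : Sym2 V) = s(u, v) →
      (∀ w : V, (G.dist w u ≤ 1 ∨ G.dist w v ≤ 1) → y' w = y w ∧ z' w = z w) →
      psiMap G Δ y' z' e = psiMap G Δ y z e) := by
  have : IsProbabilityMeasure (volume.restrict (Set.Icc (0 : ℝ) 1)) := ⟨by simp⟩
  have hedges := hasLaw_psiMap hdeg π _ hYZmeas hiid hlaw
  have hedge (e : G.edgeSet) : HasLaw (fun ω => psiMap G Δ (Y ω) (Z ω) e) π P :=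
    (measurePreserving_eval_infinitePi _ e).comp_hasLaw hedges
  refine ⟨⟨measurable_psiMap, ?_, fun e => (hedge e).map_eq⟩,
    psiMap_mapEdgeSet, fun _ _ _ _ _ _ _ => psiMap_congr⟩
  exact (iIndepFun_iff_hasLaw_Pi_infinitePi hedge hedges.aemeasurable).2 hedges

/-- Let `G` be a connected, locally finite simple graph on a countably
infinite vertex set with maximum degree `Δ < ∞`, and `(T, 𝒯, π)` a probability space.
Let `Y = (Y_v^1, …, Y_v^Δ)_{v ∈ V}` be i.i.d. with law `π^{⊗Δ}` per vertex and
`Z = (Z_v)_{v ∈ V}` i.i.d. uniform on `[0,1]`, all independent — i.e. the pairs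
`ω ↦ (Y ω v, Z ω v)` are i.i.d. with law `π^{⊗Δ} ⊗ Leb_{[0,1]}`.  Then:
(i) `ψ` is measurable and the family `(ψ(Y,Z)_e)_{e ∈ E}` is i.i.d. with law `π`;
(ii) `ψ` is equivariant under every automorphism `γ` of `G`; and
(iii) `ψ(y,z)_{{u,v}}` depends only on the coordinates `(y_w, z_w)` with
`dist(w,u) ≤ 1` or `dist(w,v) ≤ 1`. -/
theorem stmt9 {V T : Type*} [Countable V] [Infinite V] [Nonempty T]
    [MeasurableSpace T]
    (G : SimpleGraph V) (hconn : G.Connected) [G.LocallyFinite]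
    (Δ : ℕ) [NeZero Δ] (hdeg : ∀ v : V, G.degree v ≤ Δ)
    (π : Measure T) [IsProbabilityMeasure π]
    {Ω : Type*} [MeasurableSpace Ω] (P : Measure Ω) [IsProbabilityMeasure P]
    (Y : Ω → V → Fin Δ → T) (Z : Ω → V → ℝ)
    (hYZmeas : ∀ v : V, Measurable (fun ω => (Y ω v, Z ω v)))
    (hiid : iIndepFun (fun (v : V) (ω : Ω) => (Y ω v, Z ω v)) P)
    (hlaw : ∀ v : V, Measure.map (fun ω => (Y ω v, Z ω v)) P =
      (Measure.pi fun _ : Fin Δ => π).prod (volume.restrict (Set.Icc (0 : ℝ) 1))) :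
    -- (i) measurability and the i.i.d. property of `(ψ(Y,Z)_e)_{e ∈ E}` with law `π`
    (Measurable (fun p : (V → Fin Δ → T) × (V → ℝ) =>
        fun e : G.edgeSet => psiMap G Δ p.1 p.2 e) ∧
      iIndepFun
        (fun (e : G.edgeSet) (ω : Ω) => psiMap G Δ (Y ω) (Z ω) e) P ∧
      ∀ e : G.edgeSet, Measure.map (fun ω => psiMap G Δ (Y ω) (Z ω) e) P = π) ∧
    -- (ii) automorphism equivariance
    (∀ (γ : G ≃g G) (y : V → Fin Δ → T) (z : V → ℝ) (e : G.edgeSet),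
      psiMap G Δ (fun v => y (γ.symm v)) (fun v => z (γ.symm v)) (γ.mapEdgeSet e) =
        psiMap G Δ y z e) ∧
    -- (iii) locality: the value at an edge `{u,v}` depends only on coordinates within
    -- distance 1 of `u` or `v`
    (∀ (y y' : V → Fin Δ → T) (z z' : V → ℝ) (e : G.edgeSet) (u v : V),
      (e : Sym2 V) = s(u, v) →
      (∀ w : V, (G.dist w u ≤ 1 ∨ G.dist w v ≤ 1) → y' w = y w ∧ z' w = z w) →
      psiMap G Δ y' z' e = psiMap G Δ y z e) :=
  stmt9_general G Δ hdeg π P Y Z hYZmeas hiid hlaw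
end

section
/- Let G be a locally finite connected simple graph on a countable vertex set V with maximum degree Δ, 2 ≤ Δ < ∞. Let S, T be countable discrete spaces and U a measurable space; let φ : T^V → S^V and φ' : U^V → T^V be measurable (with respect to the product σ-algebras), and let Z be a U^V-valued random variable on a probability space (Ω, 𝓕, P). Suppose there exist constants C, c, c' > 0 such that for all v ∈ V and all integers r ≥ 0, P(R_v(φ, φ'(Z)) > r) ≤ C e^{−c r} and P(R_v(φ', Z) > r) ≤ C e^{−c' r}. Then there exist constants C'', c'' > 0 such that for all v ∈ V and all r ≥ 0, P(R_v(φ ∘ φ', Z) > r) ≤ C'' e^{−c'' r}. -/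
/-! If `φ ∘ φ'` is not determined by `Z` on `B(v, r)`, then with `k ≈ r / N` either `φ` is not
determined by `φ'(Z)` on `B(v, k)`, or `φ'` is not determined by `Z` on `B(u, r - k)` for one of
the at most `(Δ + 1)^k` vertices `u ∈ B(v, k)`. The union bound gives
`C e^{-ck} + (Δ + 1)^k C e^{-c'(r - k)}`, and once `N > (log (Δ + 1) + c') / c'` the decay
`e^{-c'(r - k)}` beats the growth `(Δ + 1)^k` of the ball. -/

open MeasureTheory

/-- The coding radius of `φ : T^V → S^V` at `y ∈ T^V` and `v ∈ V` (with respect to the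
graph metric of `G`): the least `r ∈ ℕ ∪ {∞}` such that `φ y' v = φ y v` for every `y'`
agreeing with `y` on the ball `B(v, r)`; it is `∞` if no such `r` exists. -/
noncomputable def codingRadius {V T S : Type*} (G : SimpleGraph V)
    (φ : (V → T) → V → S) (y : V → T) (v : V) : ℕ∞ :=
  sInf {r : ℕ∞ | ∃ n : ℕ, r = (n : ℕ∞) ∧
    ∀ y' : V → T, (∀ u : V, G.dist u v ≤ n → y' u = y u) → φ y' v = φ y v}

namespace SimpleGraph

variable {V : Type*} {G : SimpleGraph V}

lemma Connected.dist_le_or_exists_adj_dist_le (hconn : G.Connected) {u v : V} {n : ℕ}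
    (h : G.dist u v ≤ n + 1) : G.dist u v ≤ n ∨ ∃ w, G.Adj u w ∧ G.dist w v ≤ n := by
  obtain ⟨p, hp⟩ := (hconn u v).exists_walk_length_eq_dist
  cases p with
  | nil => exact Or.inl (by simp_all)
  | cons hadj q =>
    refine Or.inr ⟨_, hadj, (dist_le q).trans ?_⟩
    rw [Walk.length_cons] at hp
    omega

lemma Connected.exists_finset_ball_subset_card_le (hconn : G.Connected) [G.LocallyFinite]
    {Δ : ℕ} (hdeg : ∀ v, G.degree v ≤ Δ) (v : V) (n : ℕ) :
    ∃ s : Finset V, (∀ u, G.dist u v ≤ n → u ∈ s) ∧ s.card ≤ (Δ + 1) ^ n := by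
  classical
  induction n with
  | zero =>
    refine ⟨{v}, fun u hu => ?_, by simp⟩
    simpa using hconn.dist_eq_zero_iff.mp (Nat.le_zero.mp hu)
  | succ n ih =>
    obtain ⟨s, hs, hcard⟩ := ih
    refine ⟨s.biUnion fun w => insert w (G.neighborFinset w), fun u hu => ?_, ?_⟩
    · rcases hconn.dist_le_or_exists_adj_dist_le hu with hu | ⟨w, hadj, hw⟩
      · exact Finset.mem_biUnion.mpr ⟨u, hs u hu, Finset.mem_insert_self _ _⟩
      · exact Finset.mem_biUnion.mpr
          ⟨w, hs w hw, Finset.mem_insert_of_mem (by simpa using hadj.symm)⟩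
    · calc (s.biUnion fun w => insert w (G.neighborFinset w)).card
          ≤ ∑ w ∈ s, (insert w (G.neighborFinset w)).card := Finset.card_biUnion_le
        _ ≤ ∑ _w ∈ s, (Δ + 1) := Finset.sum_le_sum fun w _ =>
            (Finset.card_insert_le _ _).trans (by simpa using hdeg w)
        _ = s.card * (Δ + 1) := by rw [Finset.sum_const, smul_eq_mul]
        _ ≤ (Δ + 1) ^ (n + 1) := by rw [pow_succ]; gcongr

end SimpleGraph

section CodingRadius

variable {V T S U : Type*} {G : SimpleGraph V}

lemma codingRadius_le_iff {φ : (V → T) → V → S} {y : V → T} {v : V} {k : ℕ} :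
    codingRadius G φ y v ≤ k ↔
      ∀ y' : V → T, (∀ u, G.dist u v ≤ k → y' u = y u) → φ y' v = φ y v := by
  refine ⟨fun h y' hy' => ?_, fun h => sInf_le ⟨k, rfl, h⟩⟩
  obtain ⟨_, ⟨n, rfl, hn⟩, hnk⟩ :=
    sInf_lt_iff.mp (h.trans_lt (ENat.natCast_lt_natCast.mpr k.lt_succ_self))
  have hnk : n ≤ k := Nat.lt_succ_iff.mp (by exact_mod_cast hnk)
  exact hn y' fun u hu => hy' u (hu.trans hnk)

lemma codingRadius_comp_le (hconn : G.Connected) {φ : (V → T) → V → S}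
    {φ' : (V → U) → V → T} {y : V → U} {v : V} {k m : ℕ}
    (hφ : codingRadius G φ (φ' y) v ≤ k)
    (hφ' : ∀ u, G.dist u v ≤ k → codingRadius G φ' y u ≤ m) :
    codingRadius G (φ ∘ φ') y v ≤ (k + m : ℕ) := by
  refine codingRadius_le_iff.mpr fun y' hy' => codingRadius_le_iff.mp hφ _ fun u hu =>
    codingRadius_le_iff.mp (hφ' u hu) _ fun w hw => hy' w ?_
  calc G.dist w v ≤ G.dist w u + G.dist u v := hconn.dist_triangle
    _ ≤ k + m := by omega

lemma measureReal_lt_codingRadius_comp_le {Ω : Type*} [MeasurableSpace Ω] (P : Measure Ω)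
    [IsFiniteMeasure P] (hconn : G.Connected) [G.LocallyFinite] {Δ : ℕ}
    (hdeg : ∀ v, G.degree v ≤ Δ) (φ : (V → T) → V → S) (φ' : (V → U) → V → T)
    (Z : Ω → V → U) (v : V) (k m : ℕ) {b : ℝ}
    (hb : ∀ u, P.real {ω | (m : ℕ∞) < codingRadius G φ' (Z ω) u} ≤ b) :
    P.real {ω | ((k + m : ℕ) : ℕ∞) < codingRadius G (φ ∘ φ') (Z ω) v}
      ≤ P.real {ω | (k : ℕ∞) < codingRadius G φ (φ' (Z ω)) v} + ((Δ : ℝ) + 1) ^ k * b := by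
  obtain ⟨s, hball, hcard⟩ := hconn.exists_finset_ball_subset_card_le hdeg v k
  set A := {ω | (k : ℕ∞) < codingRadius G φ (φ' (Z ω)) v}
  set B := fun u => {ω | (m : ℕ∞) < codingRadius G φ' (Z ω) u}
  have hsub : {ω | ((k + m : ℕ) : ℕ∞) < codingRadius G (φ ∘ φ') (Z ω) v}
      ⊆ A ∪ ⋃ u ∈ s, B u := by
    intro ω hω
    by_contra hnot
    simp only [A, B, Set.mem_union, Set.mem_iUnion, Set.mem_ofPred_eq, not_or, not_exists,
      not_lt] at hnot
    exact (not_le.mpr hω) (codingRadius_comp_le hconn hnot.1 fun u hu => hnot.2 u (hball u hu))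
  have hb0 : 0 ≤ b := measureReal_nonneg.trans (hb v)
  calc _ ≤ P.real (A ∪ ⋃ u ∈ s, B u) := measureReal_mono hsub
    _ ≤ P.real A + ∑ u ∈ s, P.real (B u) :=
        (measureReal_union_le _ _).trans (add_le_add_right (measureReal_biUnion_finset_le _ _) _)
    _ ≤ P.real A + s.card * b := by
        grw [Finset.sum_le_card_nsmul s _ b fun u _ => hb u, nsmul_eq_mul]
    _ ≤ P.real A + ((Δ : ℝ) + 1) ^ k * b := by
        gcongr
        exact_mod_cast hcard

end CodingRadius

lemma Real.exp_neg_mul_nat_div_le {c : ℝ} (hc : 0 ≤ c) (r N : ℕ) :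
    Real.exp (-c * (r / N : ℕ)) ≤ Real.exp c * Real.exp (-(c / N) * r) := by
  rw [← Real.exp_add, Real.exp_le_exp]
  have hr : (r : ℝ) / N < (r / N : ℕ) + 1 :=
    Nat.floor_div_eq_div (K := ℝ) r N ▸ Nat.lt_floor_add_one _
  have := mul_le_mul_of_nonneg_left hr.le hc
  have hcN : c / N * r = c * (r / N) := by ring
  linarith

lemma Real.pow_mul_exp_neg_mul_sub_le {a c' : ℝ} (ha : 1 ≤ a) (hc' : 0 ≤ c') {k r N : ℕ}
    (hN : 0 < N) (hk : k * N ≤ r) :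
    a ^ k * Real.exp (-c' * (r - k : ℕ)) ≤ Real.exp (-(c' - (Real.log a + c') / N) * r) := by
  have hkr : k ≤ r := (Nat.le_mul_of_pos_right k hN).trans hk
  have hkr' : (k : ℝ) ≤ r / N := by
    rw [le_div_iff₀ (by exact_mod_cast hN)]
    exact_mod_cast hk
  rw [← Real.rpow_natCast, Real.rpow_def_of_pos (by linarith), ← Real.exp_add, Real.exp_le_exp,
    Nat.cast_sub hkr]
  have := mul_le_mul_of_nonneg_right hkr' (add_nonneg (Real.log_nonneg ha) hc')
  have hrN : -(c' - (Real.log a + c') / N) * r = -c' * r + r / N * (Real.log a + c') := by ring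
  linarith

theorem stmt11_general {V T S U : Type*}
    (G : SimpleGraph V) (hconn : G.Connected) [G.LocallyFinite]
    (Δ : ℕ) (hdeg : ∀ v : V, G.degree v ≤ Δ)
    {Ω : Type*} [MeasurableSpace Ω] (P : Measure Ω) [IsProbabilityMeasure P]
    (φ : (V → T) → V → S) (φ' : (V → U) → V → T)
    (Z : Ω → V → U)
    (C c c' : ℝ) (hC : 0 < C) (hc : 0 < c) (hc' : 0 < c')
    (hbound1 : ∀ (v : V) (r : ℕ),
      (P {ω | (r : ℕ∞) < codingRadius G φ (φ' (Z ω)) v}).toReal ≤ C * Real.exp (-c * r))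
    (hbound2 : ∀ (v : V) (r : ℕ),
      (P {ω | (r : ℕ∞) < codingRadius G φ' (Z ω) v}).toReal ≤ C * Real.exp (-c' * r)) :
    ∃ C'' c'' : ℝ, 0 < C'' ∧ 0 < c'' ∧ ∀ (v : V) (r : ℕ),
      (P {ω | (r : ℕ∞) < codingRadius G (φ ∘ φ') (Z ω) v}).toReal
        ≤ C'' * Real.exp (-c'' * r) := by
  have hΔ : (1 : ℝ) ≤ Δ + 1 := le_add_of_nonneg_left (Nat.cast_nonneg Δ)
  set L := Real.log ((Δ : ℝ) + 1)
  obtain ⟨N, hN⟩ := exists_nat_gt ((L + c') / c')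
  have hNpos : (0 : ℝ) < N :=
    (div_nonneg (add_nonneg (Real.log_nonneg hΔ) hc'.le) hc'.le).trans_lt hN
  set δ := c' - (L + c') / N
  have hδ : 0 < δ := by
    rw [div_lt_iff₀ hc', mul_comm] at hN
    exact sub_pos.mpr ((div_lt_iff₀ hNpos).mpr hN)
  refine ⟨C * Real.exp c + C, min (c / N) δ, by positivity, lt_min (div_pos hc hNpos) hδ,
    fun v r => ?_⟩
  set k := r / N
  have hsplit := measureReal_lt_codingRadius_comp_le P hconn hdeg φ φ' Z v k (r - k)
    (hbound2 · (r - k))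
  rw [Nat.add_sub_cancel' (Nat.div_le_self r N)] at hsplit
  calc (P _).toReal
      ≤ C * Real.exp (-c * k) + ((Δ : ℝ) + 1) ^ k * (C * Real.exp (-c' * (r - k : ℕ))) :=
        hsplit.trans (add_le_add (hbound1 v k) le_rfl)
    _ ≤ C * (Real.exp c * Real.exp (-(c / N) * r)) + C * Real.exp (-δ * r) := by
        rw [mul_left_comm]
        gcongr
        · exact Real.exp_neg_mul_nat_div_le hc.le r N
        · exact Real.pow_mul_exp_neg_mul_sub_le hΔ hc'.le (by exact_mod_cast hNpos)
            (Nat.div_mul_le_self r N)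
    _ ≤ (C * Real.exp c + C) * Real.exp (-min (c / N) δ * r) := by
        rw [add_mul, mul_assoc]
        gcongr
        · exact min_le_left _ _
        · exact min_le_right _ _

/-- Composition of finitary codings with exponential tails on the coding
radius again has exponential tails: if `P(R_v(φ, φ'(Z)) > r) ≤ C e^{-c r}` and
`P(R_v(φ', Z) > r) ≤ C e^{-c' r}` for all `v ∈ V` and `r ≥ 0`, on a graph of maximum
degree `Δ` with `2 ≤ Δ < ∞`, then there are `C'', c'' > 0` such that
`P(R_v(φ ∘ φ', Z) > r) ≤ C'' e^{-c'' r}` for all `v` and `r`. -/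
theorem stmt11 {V T S U : Type*} [Countable V] [Countable T] [Countable S]
    [MeasurableSpace T] [MeasurableSingletonClass T]
    [MeasurableSpace S] [MeasurableSingletonClass S]
    [MeasurableSpace U]
    (G : SimpleGraph V) (hconn : G.Connected) [G.LocallyFinite]
    (Δ : ℕ) (hΔ2 : 2 ≤ Δ) (hdeg : ∀ v : V, G.degree v ≤ Δ)
    {Ω : Type*} [MeasurableSpace Ω] (P : Measure Ω) [IsProbabilityMeasure P]
    (φ : (V → T) → V → S) (φ' : (V → U) → V → T)
    (hφ : Measurable φ) (hφ' : Measurable φ')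
    (Z : Ω → V → U) (hZ : Measurable Z)
    (C c c' : ℝ) (hC : 0 < C) (hc : 0 < c) (hc' : 0 < c')
    (hbound1 : ∀ (v : V) (r : ℕ),
      (P {ω | (r : ℕ∞) < codingRadius G φ (φ' (Z ω)) v}).toReal ≤ C * Real.exp (-c * r))
    (hbound2 : ∀ (v : V) (r : ℕ),
      (P {ω | (r : ℕ∞) < codingRadius G φ' (Z ω) v}).toReal ≤ C * Real.exp (-c' * r)) :
    ∃ C'' c'' : ℝ, 0 < C'' ∧ 0 < c'' ∧ ∀ (v : V) (r : ℕ),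
      (P {ω | (r : ℕ∞) < codingRadius G (φ ∘ φ') (Z ω) v}).toReal
        ≤ C'' * Real.exp (-c'' * r) :=
  stmt11_general G hconn Δ hdeg P φ φ' Z C c c' hC hc hc' hbound1 hbound2
end

section
/- Let (P, ≤) be a finite partially ordered set with greatest element ⊤, and let (g_n)_{n≥1} be an i.i.d. sequence of random monotone functions P → P (i.e., i.i.d. random elements of the finite set of order-preserving self-maps of P). For n ≥ 1, set f_n := g_1 ∘ g_2 ∘ ⋯ ∘ g_n (backward composition). Then: (i) almost surely, f_{n+1}(⊤) ≤ f_n(⊤) for every n, so (f_n(⊤))_{n≥1} is eventually constant with almost-sure limit σ; (ii) for every n, f_n(⊤) has the same distribution as g_n ∘ g_{n−1} ∘ ⋯ ∘ g_1(⊤); and (iii) if the distributions of g_n ∘ ⋯ ∘ g_1(⊤) converge (pointwise on P) to a probability measure π, then σ has law π. -/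
/-! Each `g n ω` is monotone, hence so is `backComp g n ω`, and
`backComp g (n + 1) ω ⊤ = backComp g n ω (g n ω ⊤) ≤ backComp g n ω ⊤`. An antitone sequence in a
finite poset is eventually constant, which defines `σ`.

`backComp g n` and `fwdComp g n` are the same function of the tuple `(g 0, …, g (n - 1))`, read in
opposite orders, and for an i.i.d. sequence the tuple and its reversal both have the product law.
So `f_n(⊤)` has the law of the forward chain at time `n`, which tends to `π`; it also tends to the
law of `σ`, because `f_n(⊤) = σ` for all large `n`. -/

open MeasureTheory ProbabilityTheory

/-- The backward composition `g 0 ∘ g 1 ∘ ⋯ ∘ g (n-1)` (with `g n` playing the role of the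
`(n+1)`-st map `g_{n+1}`): `backComp g n = g_1 ∘ g_2 ∘ ⋯ ∘ g_n`. -/
def backComp {Ω P : Type*} (g : ℕ → Ω → P → P) : ℕ → Ω → P → P
  | 0 => fun _ => id
  | n + 1 => fun ω => backComp g n ω ∘ g n ω

/-- The forward composition `g (n-1) ∘ ⋯ ∘ g 1 ∘ g 0`: `fwdComp g n = g_n ∘ ⋯ ∘ g_2 ∘ g_1`. -/
def fwdComp {Ω P : Type*} (g : ℕ → Ω → P → P) : ℕ → Ω → P → P
  | 0 => fun _ => id
  | n + 1 => fun ω => g n ω ∘ fwdComp g n ω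

open Function Filter

section Composition

/-- `compOfFn v = v 0 ∘ v 1 ∘ ⋯ ∘ v (n - 1)`. -/
def compOfFn {P : Type*} {n : ℕ} (v : Fin n → P → P) : P → P :=
  (List.ofFn (α := Function.End P) v).prod

variable {Ω P : Type*} (g : ℕ → Ω → P → P)

theorem backComp_eq_compOfFn (n : ℕ) (ω : Ω) :
    backComp g n ω = compOfFn fun i : Fin n => g i ω := by
  induction n with
  | zero => rfl
  | succ n ih =>
    show backComp g n ω ∘ g n ω = _
    rw [ih]
    erw [compOfFn, compOfFn, List.ofFn_succ', List.prod_concat]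
    rfl

theorem fwdComp_eq_compOfFn (n : ℕ) (ω : Ω) :
    fwdComp g n ω = compOfFn fun i : Fin n => g (Fin.rev i) ω := by
  induction n with
  | zero => rfl
  | succ n ih =>
    show g n ω ∘ fwdComp g n ω = _
    rw [ih]
    erw [compOfFn, compOfFn, List.ofFn_succ, List.prod_cons]
    simp only [Fin.rev_zero, Fin.rev_succ, Fin.val_castSucc, Fin.val_last]
    rfl

theorem monotone_backComp [Preorder P] (hmono : ∀ n ω, Monotone (g n ω)) (n : ℕ) (ω : Ω) :
    Monotone (backComp g n ω) := by
  induction n with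
  | zero => exact monotone_id
  | succ n ih => exact ih.comp (hmono n ω)

theorem antitone_backComp_apply_top [Preorder P] [OrderTop P] (hmono : ∀ n ω, Monotone (g n ω))
    (ω : Ω) : Antitone fun n => backComp g n ω ⊤ :=
  antitone_nat_of_succ_le fun n => monotone_backComp g hmono n ω le_top

end Composition

theorem Antitone.exists_forall_ge_eq {α : Type*} [PartialOrder α] [WellFoundedLT α] {u : ℕ → α}
    (hu : Antitone u) : ∃ N, ∀ n, N ≤ n → u n = u N :=
  (WellFoundedGT.monotone_chain_condition (α := αᵒᵈ) ⟨u, hu⟩).imp fun _ h n hn => (h n hn).symm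

section Probability

variable {Ω β : Type*} [MeasurableSpace Ω] [MeasurableSpace β] {μ : Measure Ω}

theorem measurable_of_eventually_eq [MeasurableSingletonClass β] [Countable β]
    {u : ℕ → Ω → β} {σ : Ω → β} (hu : ∀ n, Measurable (u n))
    (hσ : ∀ ω, ∀ᶠ n in atTop, u n ω = σ ω) : Measurable σ := by
  refine measurable_to_countable' fun x => ?_
  have hpre : σ ⁻¹' {x} = ⋃ N, ⋂ n ≥ N, u n ⁻¹' {x} := by
    ext ω
    simp only [Set.mem_preimage, Set.mem_singleton_iff, Set.mem_iUnion, Set.mem_iInter]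
    refine ⟨fun h => ?_, fun ⟨N, hN⟩ => ?_⟩
    · obtain ⟨N, hN⟩ := eventually_atTop.1 (hσ ω)
      exact ⟨N, fun n hn => (hN n hn).trans h⟩
    · obtain ⟨n, hn, hσn⟩ := ((hσ ω).and (eventually_ge_atTop N)).exists
      exact hn ▸ hN n hσn
  rw [hpre]
  exact .iUnion fun N => .iInter fun n => .iInter fun _ => hu n (measurableSet_singleton x)

theorem tendsto_measure_preimage_of_eventually_eq [IsFiniteMeasure μ] {u : ℕ → Ω → β}
    {σ : Ω → β} (hu : ∀ n, Measurable (u n)) (hσ : ∀ ω, ∀ᶠ n in atTop, u n ω = σ ω)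
    {s : Set β} (hs : MeasurableSet s) :
    Tendsto (fun n => μ (u n ⁻¹' s)) atTop (nhds (μ (σ ⁻¹' s))) :=
  tendsto_measure_of_tendsto_indicator_of_isFiniteMeasure atTop μ (fun n => hu n hs)
    fun ω => (hσ ω).mono fun _ h => by simp only [Set.mem_preimage, h]

theorem ProbabilityTheory.iIndepFun.map_fun_precomp_eq {ι : Type*} {g : ι → Ω → β}
    (hmeas : ∀ i, Measurable (g i)) (hindep : iIndepFun g μ)
    (hident : ∀ i j, μ.map (g i) = μ.map (g j)) {n : ℕ}
    {e e' : Fin n → ι} (he : Injective e) (he' : Injective e') :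
    μ.map (fun ω i => g (e i) ω) = μ.map (fun ω i => g (e' i) ω) := by
  rw [(hindep.precomp he).map_fun_eq_pi_map fun i => (hmeas _).aemeasurable,
    (hindep.precomp he').map_fun_eq_pi_map fun i => (hmeas _).aemeasurable]
  exact congrArg Measure.pi (funext fun i => hident _ _)

end Probability

section RandomComposition

variable {Ω P : Type*} [MeasurableSpace Ω] [Finite P] [MeasurableSpace P]
  [MeasurableSingletonClass P] {g : ℕ → Ω → P → P}

theorem measurable_backComp (hmeas : ∀ n, Measurable (g n)) (n : ℕ) :
    Measurable (backComp g n) := by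
  rw [funext (backComp_eq_compOfFn g n)]
  exact (measurable_of_finite compOfFn).comp (measurable_pi_lambda _ fun i => hmeas _)

theorem measurable_fwdComp (hmeas : ∀ n, Measurable (g n)) (n : ℕ) :
    Measurable (fwdComp g n) := by
  rw [funext (fwdComp_eq_compOfFn g n)]
  exact (measurable_of_finite compOfFn).comp (measurable_pi_lambda _ fun i => hmeas _)

theorem map_backComp_eq_map_fwdComp {μ : Measure Ω} (hmeas : ∀ n, Measurable (g n))
    (hindep : iIndepFun g μ) (hident : ∀ n m, μ.map (g n) = μ.map (g m)) (n : ℕ) :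
    μ.map (backComp g n) = μ.map (fwdComp g n) := by
  have htuple (e : Fin n → ℕ) : Measurable fun ω i => g (e i) ω :=
    measurable_pi_lambda _ fun i => hmeas (e i)
  have hback : backComp g n = compOfFn ∘ fun ω i => g i ω := funext (backComp_eq_compOfFn g n)
  have hfwd : fwdComp g n = compOfFn ∘ fun ω i => g (Fin.rev i) ω :=
    funext (fwdComp_eq_compOfFn g n)
  rw [hback, hfwd, ← Measure.map_map (measurable_of_finite _) (htuple _),
    ← Measure.map_map (measurable_of_finite _) (htuple _),
    hindep.map_fun_precomp_eq hmeas hident (e' := fun i => Fin.rev i) Fin.val_injective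
      (Fin.val_injective.comp Fin.rev_injective)]

end RandomComposition

/-- Coupling-from-the-past on a finite poset `P` with greatest element `⊤`.
Let `(g_n)_{n ≥ 1}` be an i.i.d. sequence of random monotone self-maps of `P` (here `g n`
is `g_{n+1}`), and `f_n := g_1 ∘ ⋯ ∘ g_n` the backward composition. Then: (i) almost surely
`f_{n+1}(⊤) ≤ f_n(⊤)` for every `n`, so `(f_n(⊤))` is eventually constant with an a.s.
limit `σ`; (ii) `f_n(⊤)` has the same distribution as `g_n ∘ ⋯ ∘ g_1 (⊤)`; and (iii) if the
distributions of `g_n ∘ ⋯ ∘ g_1(⊤)` converge pointwise on `P` to a probability measure `π`,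
then `σ` has law `π`. -/
theorem stmt16 {P : Type*} [Fintype P] [PartialOrder P] [OrderTop P]
    [MeasurableSpace P] [MeasurableSingletonClass P]
    {Ω : Type*} [MeasurableSpace Ω] (μ : Measure Ω) [IsProbabilityMeasure μ]
    (g : ℕ → Ω → P → P)
    (hmono : ∀ n ω, Monotone (g n ω))
    (hmeas : ∀ n, Measurable (g n))
    (hindep : iIndepFun g μ)
    (hident : ∀ n m : ℕ, Measure.map (g n) μ = Measure.map (g m) μ) :
    (∀ᵐ ω ∂μ, (∀ n : ℕ, backComp g (n + 1) ω ⊤ ≤ backComp g n ω ⊤) ∧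
        ∃ N : ℕ, ∀ n : ℕ, N ≤ n → backComp g n ω ⊤ = backComp g N ω ⊤) ∧
      (∀ n : ℕ, Measure.map (fun ω => backComp g n ω ⊤) μ =
        Measure.map (fun ω => fwdComp g n ω ⊤) μ) ∧
      ∃ σ : Ω → P, Measurable σ ∧
        (∀ᵐ ω ∂μ, ∃ N : ℕ, ∀ n : ℕ, N ≤ n → backComp g n ω ⊤ = σ ω) ∧
        ∀ π : Measure P, IsProbabilityMeasure π →
          (∀ x : P, Filter.Tendsto
              (fun n : ℕ => Measure.map (fun ω => fwdComp g n ω ⊤) μ {x})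
              Filter.atTop (nhds (π {x}))) →
          Measure.map σ μ = π := by
  have hanti := antitone_backComp_apply_top g hmono
  have hmeas_top (n : ℕ) : Measurable fun ω => backComp g n ω ⊤ :=
    (measurable_pi_apply ⊤).comp (measurable_backComp hmeas n)
  have hlaw (n : ℕ) : μ.map (fun ω => backComp g n ω ⊤) = μ.map (fun ω => fwdComp g n ω ⊤) := by
    have heval := measurable_pi_apply (X := fun _ : P => P) ⊤
    have hlaw_fun := congrArg (Measure.map fun f : P → P => f ⊤)
      (map_backComp_eq_map_fwdComp hmeas hindep hident n)
    rwa [Measure.map_map heval (measurable_backComp hmeas n),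
      Measure.map_map heval (measurable_fwdComp hmeas n)] at hlaw_fun
  choose N hN using fun ω => (hanti ω).exists_forall_ge_eq
  set σ : Ω → P := fun ω => backComp g (N ω) ω ⊤
  have hσ (ω : Ω) : ∀ᶠ n in atTop, backComp g n ω ⊤ = σ ω := eventually_atTop.2 ⟨N ω, hN ω⟩
  have hσmeas : Measurable σ := measurable_of_eventually_eq hmeas_top hσ
  refine ⟨ae_of_all μ fun ω => ⟨fun n => hanti ω n.le_succ, N ω, hN ω⟩, hlaw, σ, hσmeas,
    ae_of_all μ fun ω => ⟨N ω, hN ω⟩, fun π _ hπ => Measure.ext_of_singleton fun x => ?_⟩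
  rw [Measure.map_apply hσmeas (measurableSet_singleton x)]
  refine tendsto_nhds_unique
    (tendsto_measure_preimage_of_eventually_eq hmeas_top hσ (measurableSet_singleton x)) ?_
  simpa only [← hlaw, Measure.map_apply (hmeas_top _) (measurableSet_singleton x)] using hπ x
end
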